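/- arXiv:2601.12899 — 5 statements merged into one kernel-verified Lean document; each statement's English description precedes it below -/
import Mathlib

section
/- Let k ≥ 1 and let η_0, η_1, …, η_k be integers with η_k ≠ 0, and set C(z) = η_0 + Σ_{j=1}^k η_j (z^j + z^{−j}). Assume C(1) = C′(1) = 0 and C″(1) ≠ 0, and suppose z_1, …, z_{k−1} are nonzero complex numbers such that z^k C(z) = η_k (z − 1)² ∏_{ℓ=1}^{k−1} (z − z_ℓ)(z − z_ℓ^{−1}). Then for every integer n ≥ 1, ∏_{j=1}^{n−1} C(ε_n^j) = (1/C″(1)) · (−1)^{nk−1} · η_k^n · n² · 2^k · ∏_{ℓ=1}^{k−1} (T_n(w_ℓ) − 1), where ε_n = e^{2πi/n} and w_ℓ = (z_ℓ + z_ℓ^{−1})/2. -/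
open Complex Polynomial

/-- The Laurent polynomial `C(z) = η_0 + Σ_{j=1}^k η_j (z^j + z^{−j})`, as a function on `ℂ`. -/
noncomputable def chebLaurent (k : ℕ) (η : ℕ → ℤ) (z : ℂ) : ℂ :=
  (η 0 : ℂ) + ∑ j ∈ Finset.Icc 1 k, (η j : ℂ) * (z ^ j + z⁻¹ ^ j)

lemma cheb_eval (z : ℂ) (hz : z ≠ 0) : ∀ m : ℕ,
    Polynomial.eval ((z + z⁻¹) / 2) (Polynomial.Chebyshev.T ℂ (m : ℤ)) =
      (z ^ m + z⁻¹ ^ m) / 2 := by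
  intro m
  induction m using Nat.strong_induction_on with
  | _ m ih =>
    match m with
    | 0 => simp
    | 1 => simp
    | (m+2) =>
      have h1 := ih (m+1) (by omega)
      have h0 := ih m (by omega)
      have e2 : ((m + 2 : ℕ) : ℤ) = (m : ℤ) + 2 := by push_cast; ring
      have e1 : ((m:ℤ)+1) = ((m+1:ℕ):ℤ) := by push_cast; ring
      rw [e2, Polynomial.Chebyshev.T_add_two, e1]
      simp only [eval_sub, eval_mul, eval_ofNat, eval_X, h1, h0]
      linear_combination ((z ^ m + z⁻¹ ^ m) / 2) * (mul_inv_cancel₀ hz)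

lemma prod_Ico_poly (n : ℕ) (hn : 1 ≤ n) {ζ : ℂ} (hζ : IsPrimitiveRoot ζ n) :
    ∏ j ∈ Finset.Ico 1 n, (X - Polynomial.C (ζ ^ j)) =
      ∑ i ∈ Finset.range n, (X : Polynomial ℂ) ^ i := by
  have himg : Finset.image (ζ ^ ·) (Finset.range n) = Polynomial.nthRootsFinset n (1 : ℂ) := by
    apply Finset.eq_of_subset_of_card_le
    · intro μ hμ
      obtain ⟨i, _, rfl⟩ := Finset.mem_image.1 hμ
      rw [Polynomial.mem_nthRootsFinset (by omega)]
      rw [← pow_mul, mul_comm, pow_mul, hζ.pow_eq_one, one_pow]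
    · rw [hζ.card_nthRootsFinset, Finset.card_image_of_injOn hζ.injOn_pow, Finset.card_range]
  have h1 : (X : Polynomial ℂ) ^ n - 1 = ∏ i ∈ Finset.range n, (X - Polynomial.C (ζ ^ i)) := by
    rw [Polynomial.X_pow_sub_one_eq_prod (by omega : 0 < n) hζ, ← himg,
      Finset.prod_image (fun i hi j hj => hζ.injOn_pow (Finset.mem_coe.2 hi) (Finset.mem_coe.2 hj))]
  have h2 : ∏ i ∈ Finset.range n, (X - Polynomial.C (ζ ^ i)) =
      (X - 1) * ∏ j ∈ Finset.Ico 1 n, (X - Polynomial.C (ζ ^ j)) := by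
    rw [Finset.range_eq_Ico, Finset.prod_eq_prod_Ico_succ_bot (by omega : 0 < n)]
    simp
  have hX1 : (X : Polynomial ℂ) - 1 ≠ 0 := by
    simpa using Polynomial.X_sub_C_ne_zero (1 : ℂ)
  apply mul_left_cancel₀ hX1
  rw [← h2, ← h1, ← geom_sum_mul]
  ring

lemma iter2_of_fact (k : ℕ) (η : ℕ → ℤ) {m : ℕ} (z : Fin m → ℂ)
    (hfact : ∀ w : ℂ, w ≠ 0 →
      w ^ k * chebLaurent k η w =
        (η k : ℂ) * (w - 1) ^ 2 * ∏ ℓ, ((w - z ℓ) * (w - (z ℓ)⁻¹))) :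
    iteratedDeriv 2 (chebLaurent k η) 1 =
      2 * (η k : ℂ) * ∏ ℓ, ((1 - z ℓ) * (1 - (z ℓ)⁻¹)) := by
  set G : Polynomial ℂ := ∏ ℓ, ((X - Polynomial.C (z ℓ)) * (X - Polynomial.C (z ℓ)⁻¹)) with hG
  set P : Polynomial ℂ := Polynomial.C ((η k : ℂ)) * ((X - 1) ^ 2 * G) with hP
  have heval : ∀ w : ℂ, eval w P =
      (η k : ℂ) * (w - 1) ^ 2 * ∏ ℓ, ((w - z ℓ) * (w - (z ℓ)⁻¹)) := by
    intro w
    simp [hP, hG, eval_prod, mul_assoc]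
  set g : ℂ → ℂ := fun w => eval w P * w ^ (-(k:ℤ)) with hg
  set g1 : ℂ → ℂ := fun w =>
    eval w (derivative P) * w ^ (-(k:ℤ)) +
      eval w P * (((-(k:ℤ) : ℤ) : ℂ) * w ^ (-(k:ℤ) - 1)) with hg1
  have hCg : ∀ w : ℂ, w ≠ 0 → chebLaurent k η w = g w := by
    intro w hw
    have h := hfact w hw
    rw [← heval] at h
    rw [hg]
    simp only [zpow_neg, zpow_natCast]
    rw [← h, mul_comm (w ^ k), mul_inv_cancel_right₀ (pow_ne_zero k hw)]
  have hmem : {w : ℂ | w ≠ 0} ∈ nhds (1 : ℂ) := by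
    exact IsOpen.mem_nhds isOpen_ne one_ne_zero
  have hev : chebLaurent k η =ᶠ[nhds 1] g := Filter.eventuallyEq_of_mem hmem hCg
  have hdg : ∀ w : ℂ, w ≠ 0 → HasDerivAt g (g1 w) w := by
    intro w hw
    exact (P.hasDerivAt w).mul (hasDerivAt_zpow (-(k:ℤ)) w (Or.inl hw))
  have hdg' : deriv g =ᶠ[nhds 1] g1 :=
    Filter.eventuallyEq_of_mem hmem (fun w hw => (hdg w hw).deriv)
  have hd2 : HasDerivAt g1
      (eval 1 (derivative (derivative P)) * 1 ^ (-(k:ℤ)) +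
        eval 1 (derivative P) * (((-(k:ℤ) : ℤ) : ℂ) * 1 ^ (-(k:ℤ) - 1)) +
        (eval 1 (derivative P) * (((-(k:ℤ) : ℤ) : ℂ) * 1 ^ (-(k:ℤ) - 1)) +
          eval 1 P * (((-(k:ℤ) : ℤ) : ℂ) * (((-(k:ℤ) - 1 : ℤ) : ℂ) * 1 ^ (-(k:ℤ) - 1 - 1))))) 1 := by
    exact (((derivative P).hasDerivAt 1).mul
        (hasDerivAt_zpow (-(k:ℤ)) 1 (Or.inl one_ne_zero))).add
      ((P.hasDerivAt 1).mul
        (((hasDerivAt_zpow (-(k:ℤ) - 1) 1 (Or.inl one_ne_zero)).const_mul (((-(k:ℤ) : ℤ) : ℂ)))))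
  have hP1 : eval 1 P = 0 := by simp [hP]
  have hP'1 : eval 1 (derivative P) = 0 := by
    simp [hP, derivative_mul, derivative_pow]
  have hP''1 : eval 1 (derivative (derivative P)) =
      2 * (η k : ℂ) * ∏ ℓ, ((1 - z ℓ) * (1 - (z ℓ)⁻¹)) := by
    simp [hP, hG, derivative_mul, derivative_pow, eval_prod]
    ring
  calc iteratedDeriv 2 (chebLaurent k η) 1 = iteratedDeriv 2 g 1 :=
        hev.iteratedDeriv_eq 2
    _ = deriv (deriv g) 1 := by
        rw [show (2:ℕ) = 1 + 1 from rfl, iteratedDeriv_succ, iteratedDeriv_one]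
    _ = deriv g1 1 := hdg'.deriv_eq
    _ = _ := by rw [hd2.deriv, hP1, hP'1, hP''1]; simp

lemma final_alg (n k : ℕ) (hn : 1 ≤ n) (hk : 1 ≤ k) (a b N T : ℂ)
    (ha : a ≠ 0) (hb : b ≠ 0) :
    (-1:ℂ) ^ ((n-1)*k) * (a ^ (n-1) * N ^ 2 * ((-2:ℂ) ^ (k-1) * T * b⁻¹)) =
      1 / (2 * a * b) * (-1) ^ (n*k-1) * a ^ n * N ^ 2 * 2 ^ k * T := by
  obtain ⟨m, rfl⟩ : ∃ m, n = m + 1 := ⟨n - 1, by omega⟩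
  obtain ⟨l, rfl⟩ : ∃ l, k = l + 1 := ⟨k - 1, by omega⟩
  simp only [Nat.add_sub_cancel]
  have hmk : (m + 1) * (l + 1) - 1 = m * l + m + l := by
    have h : (m + 1) * (l + 1) = m * l + m + l + 1 := by ring
    rw [h, Nat.add_sub_cancel]
  rw [hmk, show (-2:ℂ) ^ l = (-1) ^ l * 2 ^ l from by rw [← neg_one_mul, mul_pow]]
  field_simp
  ring

theorem stmt_0 (k : ℕ) (hk : 1 ≤ k) (η : ℕ → ℤ) (hηk : η k ≠ 0)
    (hC1 : chebLaurent k η 1 = 0)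
    (hC'1 : deriv (chebLaurent k η) 1 = 0)
    (hC''1 : iteratedDeriv 2 (chebLaurent k η) 1 ≠ 0)
    (z : Fin (k - 1) → ℂ) (hz : ∀ ℓ, z ℓ ≠ 0)
    (hfact : ∀ w : ℂ, w ≠ 0 →
      w ^ k * chebLaurent k η w =
        (η k : ℂ) * (w - 1) ^ 2 * ∏ ℓ, ((w - z ℓ) * (w - (z ℓ)⁻¹)))
    (n : ℕ) (hn : 1 ≤ n) :
    ∏ j ∈ Finset.Ico 1 n,
        chebLaurent k η (Complex.exp (2 * Real.pi * Complex.I * j / n)) =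
      (1 / iteratedDeriv 2 (chebLaurent k η) 1) * (-1) ^ (n * k - 1) * (η k : ℂ) ^ n *
        (n : ℂ) ^ 2 * 2 ^ k *
        ∏ ℓ, (Polynomial.eval ((z ℓ + (z ℓ)⁻¹) / 2) (Polynomial.Chebyshev.T ℂ (n : ℤ)) - 1) := by
  have hn0 : n ≠ 0 := by omega
  set ζ : ℂ := Complex.exp (2 * Real.pi * Complex.I / n) with hζdef
  have hζ : IsPrimitiveRoot ζ n := Complex.isPrimitiveRoot_exp n hn0
  have hζ0 : ζ ≠ 0 := Complex.exp_ne_zero _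
  have hexp : ∀ j : ℕ, Complex.exp (2 * Real.pi * Complex.I * j / n) = ζ ^ j := by
    intro j
    rw [hζdef, ← Complex.exp_nat_mul]
    congr 1
    ring
  -- geometric identities
  have hgeom : ∀ x : ℂ, ∏ j ∈ Finset.Ico 1 n, (x - ζ ^ j) = ∑ i ∈ Finset.range n, x ^ i := by
    intro x
    have := congrArg (Polynomial.eval x) (prod_Ico_poly n hn hζ)
    simpa [eval_prod] using this
  have hgm : ∀ x : ℂ, (∏ j ∈ Finset.Ico 1 n, (x - ζ ^ j)) * (x - 1) = x ^ n - 1 := by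
    intro x
    rw [hgeom]
    exact geom_sum_mul x n
  have hone : ∏ j ∈ Finset.Ico 1 n, ((1:ℂ) - ζ ^ j) = (n : ℂ) := by
    have := hgeom 1
    simpa using this
  have hneg : ∀ x : ℂ, ∏ j ∈ Finset.Ico 1 n, (ζ ^ j - x) =
      (-1) ^ (n - 1) * ∏ j ∈ Finset.Ico 1 n, (x - ζ ^ j) := by
    intro x
    rw [Finset.prod_congr rfl (fun j _ => (by ring : ζ ^ j - x = (-1) * (x - ζ ^ j))),
      Finset.prod_mul_distrib, Finset.prod_const, Nat.card_Ico]
  have hsq : ((-1:ℂ) ^ (n-1)) * ((-1:ℂ) ^ (n-1)) = 1 := by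
    rw [← pow_add]
    exact Even.neg_one_pow ⟨n - 1, rfl⟩
  have hprodζ : ∏ j ∈ Finset.Ico 1 n, ζ ^ j = (-1:ℂ) ^ (n - 1) := by
    have hsum : ∑ i ∈ Finset.range n, (0:ℂ) ^ i = 1 := by
      rw [Finset.sum_eq_single_of_mem 0 (Finset.mem_range.2 (by omega))
        (fun b _ hb => zero_pow hb), pow_zero]
    have h0 : (-1:ℂ) ^ (n-1) * ∏ j ∈ Finset.Ico 1 n, ζ ^ j = 1 := by
      have := hgeom 0
      rw [hsum] at this
      rw [Finset.prod_congr rfl (fun j _ => (by ring : (0:ℂ) - ζ ^ j = (-1) * ζ ^ j)),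
        Finset.prod_mul_distrib, Finset.prod_const, Nat.card_Ico] at this
      exact this
    have h2 := congrArg (fun t => (-1:ℂ) ^ (n-1) * t) h0
    rwa [← mul_assoc, hsq, one_mul, mul_one] at h2
  -- second derivative value
  have hC''val : iteratedDeriv 2 (chebLaurent k η) 1 =
      2 * (η k : ℂ) * ∏ ℓ, ((1 - z ℓ) * (1 - (z ℓ)⁻¹)) := iter2_of_fact k η z hfact
  have hG1 : (∏ ℓ, ((1 - z ℓ) * (1 - (z ℓ)⁻¹))) ≠ 0 := by
    intro h
    exact hC''1 (by rw [hC''val, h, mul_zero])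
  have hfacne : ∀ ℓ, (1 - z ℓ) ≠ 0 ∧ (1 - (z ℓ)⁻¹) ≠ 0 := by
    intro ℓ
    have := Finset.prod_ne_zero_iff.1 hG1 ℓ (Finset.mem_univ ℓ)
    exact mul_ne_zero_iff.1 this
  -- per-ℓ product
  have hper : ∀ ℓ, ∏ j ∈ Finset.Ico 1 n, ((ζ ^ j - z ℓ) * (ζ ^ j - (z ℓ)⁻¹)) =
      (-2) * (Polynomial.eval ((z ℓ + (z ℓ)⁻¹) / 2) (Polynomial.Chebyshev.T ℂ (n : ℤ)) - 1) *
        ((1 - z ℓ) * (1 - (z ℓ)⁻¹))⁻¹ := by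
    intro ℓ
    obtain ⟨d1, d2⟩ := hfacne ℓ
    have d1' : z ℓ - 1 ≠ 0 := fun h => d1 (by linear_combination -h)
    have d2' : (z ℓ)⁻¹ - 1 ≠ 0 := fun h => d2 (by linear_combination -h)
    have hWne : (z ℓ) ^ n ≠ 0 := pow_ne_zero n (hz ℓ)
    rw [Finset.prod_mul_distrib, hneg (z ℓ), hneg (z ℓ)⁻¹, cheb_eval (z ℓ) (hz ℓ) n]
    have e1 := hgm (z ℓ)
    have e2 := hgm (z ℓ)⁻¹
    apply mul_right_cancel₀ (mul_ne_zero d1' d2')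
    calc ((-1:ℂ) ^ (n-1) * ∏ j ∈ Finset.Ico 1 n, (z ℓ - ζ ^ j)) *
          ((-1:ℂ) ^ (n-1) * ∏ j ∈ Finset.Ico 1 n, ((z ℓ)⁻¹ - ζ ^ j)) * ((z ℓ - 1) * ((z ℓ)⁻¹ - 1))
        = (((-1:ℂ) ^ (n-1)) * ((-1:ℂ) ^ (n-1))) *
            (((∏ j ∈ Finset.Ico 1 n, (z ℓ - ζ ^ j)) * (z ℓ - 1)) *
             ((∏ j ∈ Finset.Ico 1 n, ((z ℓ)⁻¹ - ζ ^ j)) * ((z ℓ)⁻¹ - 1))) := by ring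
      _ = ((z ℓ) ^ n - 1) * ((z ℓ)⁻¹ ^ n - 1) := by rw [hsq, one_mul, e1, e2]
      _ = (-2) * (((z ℓ) ^ n + (z ℓ)⁻¹ ^ n) / 2 - 1) *
            ((1 - z ℓ) * (1 - (z ℓ)⁻¹))⁻¹ * ((z ℓ - 1) * ((z ℓ)⁻¹ - 1)) := by
          rw [inv_pow]
          rw [show ((1:ℂ) - z ℓ) * (1 - (z ℓ)⁻¹) = (z ℓ - 1) * ((z ℓ)⁻¹ - 1) from by ring]
          rw [inv_mul_cancel_right₀ (mul_ne_zero d1' d2')]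
          linear_combination mul_inv_cancel₀ hWne
  -- rewrite every factor of the LHS
  have hstep : ∀ j ∈ Finset.Ico 1 n,
      chebLaurent k η (Complex.exp (2 * Real.pi * Complex.I * j / n)) =
        ((ζ ^ j) ^ k)⁻¹ * ((η k : ℂ) * (ζ ^ j - 1) ^ 2 *
          ∏ ℓ, ((ζ ^ j - z ℓ) * (ζ ^ j - (z ℓ)⁻¹))) := by
    intro j _
    rw [hexp j]
    have h := hfact (ζ ^ j) (pow_ne_zero j hζ0)
    rw [← h, inv_mul_cancel_left₀ (pow_ne_zero k (pow_ne_zero j hζ0))]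
  rw [Finset.prod_congr rfl hstep]
  rw [Finset.prod_mul_distrib, Finset.prod_mul_distrib, Finset.prod_mul_distrib]
  -- compute the pieces
  have hT0 : ∏ j ∈ Finset.Ico 1 n, ((ζ ^ j) ^ k)⁻¹ = (-1:ℂ) ^ ((n-1) * k) := by
    rw [Finset.prod_inv_distrib, Finset.prod_pow, hprodζ, ← pow_mul, ← inv_pow]
    norm_num
  have hT1 : ∏ _j ∈ Finset.Ico 1 n, (η k : ℂ) = (η k : ℂ) ^ (n - 1) := by
    rw [Finset.prod_const, Nat.card_Ico]
  have hT2 : ∏ j ∈ Finset.Ico 1 n, (ζ ^ j - 1) ^ 2 = (n : ℂ) ^ 2 := by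
    rw [Finset.prod_congr rfl (fun j _ => (by ring : (ζ ^ j - 1) ^ 2 = (1 - ζ ^ j) ^ 2)),
      Finset.prod_pow, hone]
  have hT3 : ∏ j ∈ Finset.Ico 1 n, ∏ ℓ, ((ζ ^ j - z ℓ) * (ζ ^ j - (z ℓ)⁻¹)) =
      (-2:ℂ) ^ (k-1) *
        (∏ ℓ, (Polynomial.eval ((z ℓ + (z ℓ)⁻¹) / 2) (Polynomial.Chebyshev.T ℂ (n : ℤ)) - 1)) *
        (∏ ℓ, ((1 - z ℓ) * (1 - (z ℓ)⁻¹)))⁻¹ := by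
    rw [Finset.prod_comm, Finset.prod_congr rfl (fun ℓ _ => hper ℓ),
      Finset.prod_mul_distrib, Finset.prod_mul_distrib, Finset.prod_const,
      Finset.card_univ, Fintype.card_fin, ← Finset.prod_inv_distrib]
  rw [hT0, hT1, hT2, hT3, hC''val]
  exact final_alg n k hn hk (η k : ℂ) (∏ ℓ, ((1 - z ℓ) * (1 - (z ℓ)⁻¹))) (n : ℂ)
    (∏ ℓ, (Polynomial.eval ((z ℓ + (z ℓ)⁻¹) / 2) (Polynomial.Chebyshev.T ℂ (n : ℤ)) - 1))
    (Int.cast_ne_zero.mpr hηk) hG1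
end

section
/- Assume at least one of the following holds: gcd(α_1,…,α_r) = 1; gcd(β_1,…,β_t) = 1; gcd({γ_i − γ_j : 1 ≤ j < i ≤ s}) = 1. Then for every θ ∈ ℝ, P_1(e^{iθ}) is a nonnegative real number, and P_1(e^{iθ}) = 0 if and only if e^{iθ} = 1. -/
open Complex

/-- `A(z) = 2r + s − Σ_j (z^{α_j} + z^{−α_j})` (also used for `B` with `t, β`). -/
noncomputable def lpA (r s : ℕ) (α : Fin r → ℕ) (z : ℂ) : ℂ :=
  ((2 * r + s : ℕ) : ℂ) - ∑ j, (z ^ α j + z⁻¹ ^ α j)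

/-- `C(z) = Σ_j z^{γ_j}`. -/
noncomputable def lpC (s : ℕ) (γ : Fin s → ℕ) (z : ℂ) : ℂ := ∑ j, z ^ γ j

/-- `P_1(z) = A(z)B(z) − C(z)C(z⁻¹)`. -/
noncomputable def lpP1 (r t s : ℕ) (α : Fin r → ℕ) (β : Fin t → ℕ) (γ : Fin s → ℕ)
    (z : ℂ) : ℂ :=
  lpA r s α z * lpA t s β z - lpC s γ z * lpC s γ z⁻¹

/-- `P_2(z) = (A(z)+2)B(z) − C(z)C(z⁻¹)`. -/
noncomputable def lpP2 (r t s : ℕ) (α : Fin r → ℕ) (β : Fin t → ℕ) (γ : Fin s → ℕ)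
    (z : ℂ) : ℂ :=
  (lpA r s α z + 2) * lpA t s β z - lpC s γ z * lpC s γ z⁻¹

/-- `P_3(z) = A(z)(B(z)+2) − C(z)C(z⁻¹)`. -/
noncomputable def lpP3 (r t s : ℕ) (α : Fin r → ℕ) (β : Fin t → ℕ) (γ : Fin s → ℕ)
    (z : ℂ) : ℂ :=
  lpA r s α z * (lpA t s β z + 2) - lpC s γ z * lpC s γ z⁻¹

/-- `P_4(z) = (A(z)+2)(B(z)+2) − C(z)C(z⁻¹)`. -/
noncomputable def lpP4 (r t s : ℕ) (α : Fin r → ℕ) (β : Fin t → ℕ) (γ : Fin s → ℕ)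
    (z : ℂ) : ℂ :=
  (lpA r s α z + 2) * (lpA t s β z + 2) - lpC s γ z * lpC s γ z⁻¹

lemma aux_pow_gcd_two {z : ℂ} (hz : z ≠ 0) {m n : ℕ} (hm : z ^ m = 1) (hn : z ^ n = 1) :
    z ^ Nat.gcd m n = 1 := by
  have h := Nat.gcd_eq_gcd_ab m n
  have h2 : z ^ ((Nat.gcd m n : ℤ)) = 1 := by
    rw [h, zpow_add₀ hz, zpow_mul, zpow_mul]
    simp only [zpow_natCast, hm, hn, one_zpow, one_mul]
  rw [← zpow_natCast, h2]

lemma aux_pow_finset_gcd {z : ℂ} (hz : z ≠ 0) {ι : Type*} [DecidableEq ι] (S : Finset ι)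
    (f : ι → ℕ) (h : ∀ i ∈ S, z ^ f i = 1) : z ^ S.gcd f = 1 := by
  induction S using Finset.induction_on with
  | empty => simp
  | @insert a S ha ih =>
    rw [Finset.gcd_insert]
    exact aux_pow_gcd_two hz (h a (Finset.mem_insert_self a S))
      (ih fun i hi => h i (Finset.mem_insert_of_mem hi))

lemma aux_term (θ : ℝ) (n : ℕ) :
    (Complex.exp (θ * I)) ^ n + (Complex.exp (θ * I))⁻¹ ^ n
      = ((2 * Real.cos (n * θ) : ℝ) : ℂ) := by
  rw [← Complex.exp_neg, ← Complex.exp_nat_mul, ← Complex.exp_nat_mul]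
  have h1 : (n : ℂ) * (↑θ * I) = ((n * θ : ℝ) : ℂ) * I := by push_cast; ring
  have h2 : (n : ℂ) * -(↑θ * I) = ((-(n * θ) : ℝ) : ℂ) * I := by push_cast; ring
  rw [h1, h2, Complex.exp_mul_I, Complex.exp_mul_I]
  push_cast
  simp [Complex.cos_neg, Complex.sin_neg]
  ring

lemma aux_exp_pow_eq_one (θ : ℝ) (n : ℕ) (h : Real.cos (n * θ) = 1) :
    (Complex.exp (θ * I)) ^ n = 1 := by
  have hs : Real.sin (n * θ) = 0 := by nlinarith [Real.sin_sq_add_cos_sq (n * θ)]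
  rw [← Complex.exp_nat_mul]
  have h1 : (n : ℂ) * (↑θ * I) = ((n * θ : ℝ) : ℂ) * I := by push_cast; ring
  rw [h1, Complex.exp_mul_I, ← Complex.ofReal_cos, ← Complex.ofReal_sin, h, hs]
  simp

lemma aux_eq_one_of_re {w : ℂ} (h1 : ‖w‖ = 1) (h2 : w.re = 1) : w = 1 := by
  have h3 : Complex.normSq w = 1 := by rw [← Complex.sq_norm, h1]; norm_num
  have h4 : w.im = 0 := by
    have := Complex.normSq_apply w
    nlinarith
  exact Complex.ext (by simp [h2]) (by simp [h4])

lemma aux_lpA (r s : ℕ) (α : Fin r → ℕ) (θ : ℝ) :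
    lpA r s α (Complex.exp (θ * I)) =
      (((2 * r + s : ℝ) - ∑ j, 2 * Real.cos (α j * θ) : ℝ) : ℂ) := by
  unfold lpA
  simp only [aux_term]
  rw [Complex.ofReal_sub, Complex.ofReal_sum]
  norm_cast

lemma aux_conj_exp (θ : ℝ) :
    (starRingEnd ℂ) (Complex.exp (θ * I)) = (Complex.exp (θ * I))⁻¹ := by
  rw [← Complex.exp_conj, ← Complex.exp_neg]
  congr 1
  simp

lemma aux_lpC_inv (s : ℕ) (γ : Fin s → ℕ) (θ : ℝ) :
    lpC s γ (Complex.exp (θ * I))⁻¹ = (starRingEnd ℂ) (lpC s γ (Complex.exp (θ * I))) := by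
  unfold lpC
  rw [map_sum]
  exact Finset.sum_congr rfl fun j _ => by rw [map_pow, aux_conj_exp]

theorem stmt_1 (r t s : ℕ) (hs : 1 ≤ s)
    (α : Fin r → ℕ) (hα1 : ∀ j, 1 ≤ α j) (hαmono : StrictMono α)
    (β : Fin t → ℕ) (hβ1 : ∀ j, 1 ≤ β j) (hβmono : StrictMono β)
    (γ : Fin s → ℕ) (hγmono : StrictMono γ)
    (hgcd : Finset.univ.gcd α = 1 ∨ Finset.univ.gcd β = 1 ∨
      (Finset.univ.filter (fun p : Fin s × Fin s => p.1 < p.2)).gcd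
        (fun p => γ p.2 - γ p.1) = 1)
    (θ : ℝ) :
    (lpP1 r t s α β γ (Complex.exp (θ * Complex.I))).im = 0 ∧
    0 ≤ (lpP1 r t s α β γ (Complex.exp (θ * Complex.I))).re ∧
    (lpP1 r t s α β γ (Complex.exp (θ * Complex.I)) = 0 ↔
      Complex.exp (θ * Complex.I) = 1) := by
  have hz0 : Complex.exp (↑θ * I) ≠ 0 := Complex.exp_ne_zero _
  have habs : ‖Complex.exp (↑θ * I)‖ = 1 := Complex.norm_exp_ofReal_mul_I θ
  set z := Complex.exp (↑θ * I) with hzdef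
  set aR : ℝ := (2 * r + s : ℝ) - ∑ j, 2 * Real.cos (α j * θ) with haRdef
  set bR : ℝ := (2 * t + s : ℝ) - ∑ j, 2 * Real.cos (β j * θ) with hbRdef
  set c : ℂ := lpC s γ z with hcdef
  have hP : lpP1 r t s α β γ z = ((aR * bR - Complex.normSq c : ℝ) : ℂ) := by
    unfold lpP1
    rw [hzdef, aux_lpA r s α θ, aux_lpA t s β θ, aux_lpC_inv, Complex.mul_conj,
      ← haRdef, ← hbRdef, ← hzdef, ← hcdef]
    push_cast
    ring
  have hs0 : (1 : ℝ) ≤ s := by exact_mod_cast hs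
  have haS : (s : ℝ) ≤ aR := by
    have h2r : ∑ j, 2 * Real.cos (α j * θ) ≤ ∑ _j : Fin r, (2 : ℝ) :=
      Finset.sum_le_sum fun i _ => by nlinarith [Real.cos_le_one (α i * θ)]
    have : ∑ _j : Fin r, (2 : ℝ) = 2 * r := by simp [mul_comm]
    rw [haRdef]; linarith
  have hbS : (s : ℝ) ≤ bR := by
    have h2r : ∑ j, 2 * Real.cos (β j * θ) ≤ ∑ _j : Fin t, (2 : ℝ) :=
      Finset.sum_le_sum fun i _ => by nlinarith [Real.cos_le_one (β i * θ)]
    have : ∑ _j : Fin t, (2 : ℝ) = 2 * t := by simp [mul_comm]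
    rw [hbRdef]; linarith
  have hcabs : ‖c‖ ≤ s := by
    rw [hcdef]
    unfold lpC
    calc ‖∑ j, z ^ γ j‖ ≤ ∑ j : Fin s, ‖z ^ γ j‖ :=
          norm_sum_le _ _
      _ = s := by simp [map_pow, habs]
  have hcns : Complex.normSq c ≤ (s : ℝ) * s := by
    rw [← Complex.sq_norm]
    nlinarith [norm_nonneg c]
  have hss : (s : ℝ) * s ≤ aR * bR := by nlinarith
  refine ⟨by rw [hP]; simp, by rw [hP, Complex.ofReal_re]; linarith, ?_, ?_⟩
  · intro h0
    rw [hP, Complex.ofReal_eq_zero] at h0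
    have hAB : aR * bR = (s : ℝ) * s := by linarith
    have hcn : Complex.normSq c = (s : ℝ) * s := by linarith
    have hAs : aR = s := le_antisymm (by nlinarith) haS
    have hBs : bR = s := le_antisymm (by nlinarith) hbS
    have hz1 : z ^ 1 = 1 := by
      rcases hgcd with hg | hg | hg
      · rw [← hg]
        apply aux_pow_finset_gcd hz0
        intro j _
        have hsum : ∑ j, 2 * Real.cos (α j * θ) = ∑ _j : Fin r, (2 : ℝ) := by
          have : ∑ _j : Fin r, (2 : ℝ) = 2 * r := by simp [mul_comm]
          rw [haRdef] at hAs; linarith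
        have hall := (Finset.sum_eq_sum_iff_of_le
          (fun i _ => by nlinarith [Real.cos_le_one (α i * θ)])).mp hsum
        have hcos : Real.cos (α j * θ) = 1 := by
          have := hall j (Finset.mem_univ j); linarith
        rw [hzdef]
        exact aux_exp_pow_eq_one θ (α j) hcos
      · rw [← hg]
        apply aux_pow_finset_gcd hz0
        intro j _
        have hsum : ∑ j, 2 * Real.cos (β j * θ) = ∑ _j : Fin t, (2 : ℝ) := by
          have : ∑ _j : Fin t, (2 : ℝ) = 2 * t := by simp [mul_comm]
          rw [hbRdef] at hBs; linarith
        have hall := (Finset.sum_eq_sum_iff_of_le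
          (fun i _ => by nlinarith [Real.cos_le_one (β i * θ)])).mp hsum
        have hcos : Real.cos (β j * θ) = 1 := by
          have := hall j (Finset.mem_univ j); linarith
        rw [hzdef]
        exact aux_exp_pow_eq_one θ (β j) hcos
      · rw [← hg]
        apply aux_pow_finset_gcd hz0
        intro p hp
        have hplt : p.1 < p.2 := (Finset.mem_filter.mp hp).2
        have hexp : Complex.normSq c =
            ∑ p : Fin s × Fin s, (z ^ γ p.1 * (starRingEnd ℂ) (z ^ γ p.2)).re := by
          have e1 : c * (starRingEnd ℂ) c =
              ∑ i : Fin s, ∑ j : Fin s, z ^ γ i * (starRingEnd ℂ) (z ^ γ j) := by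
            rw [hcdef]
            unfold lpC
            rw [map_sum, Finset.sum_mul_sum]
          have e2 : ∑ q : Fin s × Fin s, z ^ γ q.1 * (starRingEnd ℂ) (z ^ γ q.2)
              = c * (starRingEnd ℂ) c := by
            rw [e1, Fintype.sum_prod_type]
          rw [← Complex.re_sum, e2]
          rw [Complex.mul_conj]
          simp
        have hle1 : ∀ q : Fin s × Fin s, q ∈ Finset.univ →
            (z ^ γ q.1 * (starRingEnd ℂ) (z ^ γ q.2)).re ≤ 1 := by
          intro q _
          have habsq : ‖z ^ γ q.1 * (starRingEnd ℂ) (z ^ γ q.2)‖ = 1 := by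
            simp [map_mul, map_pow, habs]
          calc (z ^ γ q.1 * (starRingEnd ℂ) (z ^ γ q.2)).re
              ≤ ‖_‖ := Complex.re_le_norm _
            _ = 1 := habsq
        have hsum2 : ∑ q : Fin s × Fin s, (z ^ γ q.1 * (starRingEnd ℂ) (z ^ γ q.2)).re
            = ∑ _q : Fin s × Fin s, (1 : ℝ) := by
          rw [← hexp, hcn]
          simp [Finset.card_univ]
        have hall := (Finset.sum_eq_sum_iff_of_le hle1).mp hsum2
        have hterm : z ^ γ p.1 * (starRingEnd ℂ) (z ^ γ p.2) = 1 := by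
          apply aux_eq_one_of_re
          · simp [map_mul, map_pow, habs]
          · exact hall p (Finset.mem_univ p)
        have hvv : (starRingEnd ℂ) (z ^ γ p.2) * z ^ γ p.2 = 1 := by
          rw [mul_comm, Complex.mul_conj, ← Complex.sq_norm]
          simp [map_pow, habs]
        have huv : z ^ γ p.1 = z ^ γ p.2 := by
          have h5 : z ^ γ p.1 * (starRingEnd ℂ) (z ^ γ p.2) * z ^ γ p.2
              = 1 * z ^ γ p.2 := by rw [hterm]
          rw [mul_assoc, hvv, mul_one, one_mul] at h5
          exact h5
        have hlt : γ p.1 < γ p.2 := hγmono hplt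
        have h6 : z ^ (γ p.2 - γ p.1) * z ^ γ p.1 = 1 * z ^ γ p.1 := by
          rw [← pow_add, Nat.sub_add_cancel hlt.le, one_mul, ← huv]
        exact mul_right_cancel₀ (pow_ne_zero _ hz0) h6
    rwa [pow_one] at hz1
  · intro h1
    rw [h1]
    unfold lpP1 lpA lpC
    simp [Finset.sum_const, Finset.card_univ]
    push_cast
    ring
end

section
/- For every θ ∈ ℝ, the values P_2(e^{iθ}), P_3(e^{iθ}) and P_4(e^{iθ}) are real numbers satisfying P_2(e^{iθ}) ≥ 2s, P_3(e^{iθ}) ≥ 2s and P_4(e^{iθ}) ≥ 4s; in particular, since s ≥ 1, all three are strictly positive. -/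
open Complex

lemma exp_inv_eq_conj (θ : ℝ) :
    (Complex.exp (θ * Complex.I))⁻¹ = starRingEnd ℂ (Complex.exp (θ * Complex.I)) := by
  have h : Complex.exp (θ * Complex.I) * starRingEnd ℂ (Complex.exp (θ * Complex.I)) = 1 := by
    rw [Complex.mul_conj]
    norm_cast
    rw [← Complex.sq_norm, Complex.norm_exp_ofReal_mul_I]
    norm_num
  exact inv_eq_of_mul_eq_one_right h

lemma lpA_real (r s : ℕ) (α : Fin r → ℕ) (θ : ℝ) :
    ∃ a : ℝ, lpA r s α (Complex.exp (θ * Complex.I)) = (a : ℂ) ∧ (s : ℝ) ≤ a := by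
  set z := Complex.exp (θ * Complex.I) with hz
  have habs : ‖z‖ = 1 := Complex.norm_exp_ofReal_mul_I θ
  refine ⟨(2 * r + s : ℝ) - ∑ j, 2 * (z ^ α j).re, ?_, ?_⟩
  · have hsum : ∑ j, (z ^ α j + (starRingEnd ℂ z) ^ α j)
        = ((∑ j, 2 * (z ^ α j).re : ℝ) : ℂ) := by
      push_cast
      refine Finset.sum_congr rfl fun j _ => ?_
      rw [← map_pow, Complex.add_conj]
      push_cast
      ring
    unfold lpA
    rw [exp_inv_eq_conj, hsum]
    push_cast
    ring
  · have hb : ∀ j : Fin r, 2 * (z ^ α j).re ≤ 2 := by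
      intro j
      have h1 : (z ^ α j).re ≤ 1 := by
        calc (z ^ α j).re ≤ ‖z ^ α j‖ := Complex.re_le_norm _
          _ = 1 := by rw [norm_pow, habs, one_pow]
      linarith
    have hsum : ∑ j, 2 * (z ^ α j).re ≤ ∑ _j : Fin r, (2 : ℝ) :=
      Finset.sum_le_sum fun j _ => hb j
    simp at hsum
    linarith

lemma lpC_prod (s : ℕ) (γ : Fin s → ℕ) (θ : ℝ) :
    ∃ c : ℝ, lpC s γ (Complex.exp (θ * Complex.I)) *
        lpC s γ (Complex.exp (θ * Complex.I))⁻¹ = (c : ℂ) ∧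
      0 ≤ c ∧ c ≤ (s : ℝ) ^ 2 := by
  set z := Complex.exp (θ * Complex.I) with hz
  have habs : ‖z‖ = 1 := Complex.norm_exp_ofReal_mul_I θ
  have hconj : lpC s γ z⁻¹ = starRingEnd ℂ (lpC s γ z) := by
    unfold lpC
    rw [exp_inv_eq_conj, map_sum]
    simp [map_pow, hz]
  refine ⟨Complex.normSq (lpC s γ z), ?_, Complex.normSq_nonneg _, ?_⟩
  · rw [hconj, Complex.mul_conj]
  · have habsC : ‖lpC s γ z‖ ≤ (s : ℝ) := by
      unfold lpC
      calc ‖∑ j, z ^ γ j‖ ≤ ∑ j, ‖z ^ γ j‖ := by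
            exact norm_sum_le _ _
        _ = ∑ _j : Fin s, (1 : ℝ) := by
            refine Finset.sum_congr rfl fun j _ => ?_
            rw [norm_pow, habs, one_pow]
        _ = (s : ℝ) := by simp
    rw [← Complex.sq_norm]
    have h0 : (0 : ℝ) ≤ ‖lpC s γ z‖ := norm_nonneg _
    nlinarith

theorem stmt_2 (r t s : ℕ) (hs : 1 ≤ s)
    (α : Fin r → ℕ) (hα1 : ∀ j, 1 ≤ α j) (hαmono : StrictMono α)
    (β : Fin t → ℕ) (hβ1 : ∀ j, 1 ≤ β j) (hβmono : StrictMono β)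
    (γ : Fin s → ℕ) (hγmono : StrictMono γ)
    (θ : ℝ) :
    ((lpP2 r t s α β γ (Complex.exp (θ * Complex.I))).im = 0 ∧
      (2 * s : ℝ) ≤ (lpP2 r t s α β γ (Complex.exp (θ * Complex.I))).re ∧
      0 < (lpP2 r t s α β γ (Complex.exp (θ * Complex.I))).re) ∧
    ((lpP3 r t s α β γ (Complex.exp (θ * Complex.I))).im = 0 ∧
      (2 * s : ℝ) ≤ (lpP3 r t s α β γ (Complex.exp (θ * Complex.I))).re ∧
      0 < (lpP3 r t s α β γ (Complex.exp (θ * Complex.I))).re) ∧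
    ((lpP4 r t s α β γ (Complex.exp (θ * Complex.I))).im = 0 ∧
      (4 * s : ℝ) ≤ (lpP4 r t s α β γ (Complex.exp (θ * Complex.I))).re ∧
      0 < (lpP4 r t s α β γ (Complex.exp (θ * Complex.I))).re) := by
  obtain ⟨a, ha, has⟩ := lpA_real r s α θ
  obtain ⟨b, hb, hbs⟩ := lpA_real t s β θ
  obtain ⟨c, hc, hc0, hcs⟩ := lpC_prod s γ θ
  have hs1 : (1 : ℝ) ≤ (s : ℝ) := by exact_mod_cast hs
  have hb0 : (0 : ℝ) ≤ b := by linarith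
  have h2 : lpP2 r t s α β γ (Complex.exp (θ * Complex.I)) = (((a + 2) * b - c : ℝ) : ℂ) := by
    unfold lpP2; rw [ha, hb, hc]; push_cast; ring
  have h3 : lpP3 r t s α β γ (Complex.exp (θ * Complex.I)) = ((a * (b + 2) - c : ℝ) : ℂ) := by
    unfold lpP3; rw [ha, hb, hc]; push_cast; ring
  have h4 : lpP4 r t s α β γ (Complex.exp (θ * Complex.I)) =
      (((a + 2) * (b + 2) - c : ℝ) : ℂ) := by
    unfold lpP4; rw [ha, hb, hc]; push_cast; ring
  rw [h2, h3, h4]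
  simp only [Complex.ofReal_im, Complex.ofReal_re]
  refine ⟨⟨trivial, ?_, ?_⟩, ⟨trivial, ?_, ?_⟩, ⟨trivial, ?_, ?_⟩⟩
  · nlinarith [mul_nonneg (sub_nonneg.2 has) hb0, mul_nonneg (sub_nonneg.2 hbs)
      (by linarith : (0:ℝ) ≤ (s:ℝ) + 2)]
  · nlinarith [mul_nonneg (sub_nonneg.2 has) hb0, mul_nonneg (sub_nonneg.2 hbs)
      (by linarith : (0:ℝ) ≤ (s:ℝ) + 2)]
  · nlinarith [mul_nonneg (sub_nonneg.2 has) (by linarith : (0:ℝ) ≤ b + 2),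
      mul_nonneg (sub_nonneg.2 hbs) (by linarith : (0:ℝ) ≤ (s:ℝ))]
  · nlinarith [mul_nonneg (sub_nonneg.2 has) (by linarith : (0:ℝ) ≤ b + 2),
      mul_nonneg (sub_nonneg.2 hbs) (by linarith : (0:ℝ) ≤ (s:ℝ))]
  · nlinarith [mul_nonneg (sub_nonneg.2 has) (by linarith : (0:ℝ) ≤ b + 2),
      mul_nonneg (sub_nonneg.2 hbs) (by linarith : (0:ℝ) ≤ (s:ℝ) + 2)]
  · nlinarith [mul_nonneg (sub_nonneg.2 has) (by linarith : (0:ℝ) ≤ b + 2),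
      mul_nonneg (sub_nonneg.2 hbs) (by linarith : (0:ℝ) ≤ (s:ℝ) + 2)]
end

section
/- The Laurent polynomial P_1 satisfies P_1(1) = 0, P_1′(1) = 0 and P_1″(1) = −2·(s Σ_{j=1}^r α_j² + s Σ_{j=1}^t β_j² + Σ_{1≤j<i≤s} (γ_j − γ_i)²); in particular, if r ≥ 1 or t ≥ 1 or the γ_j are not all equal, then P_1″(1) < 0. -/
open Complex

/-- `q = s Σ α_j² + s Σ β_j² + Σ_{j<i} (γ_j − γ_i)²`. -/
def qVal (r t s : ℕ) (α : Fin r → ℕ) (β : Fin t → ℕ) (γ : Fin s → ℕ) : ℤ :=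
  (s : ℤ) * ∑ j, (α j : ℤ) ^ 2 + (s : ℤ) * ∑ j, (β j : ℤ) ^ 2 +
    ∑ p ∈ Finset.univ.filter (fun p : Fin s × Fin s => p.1 < p.2),
      ((γ p.1 : ℤ) - (γ p.2 : ℤ)) ^ 2


lemma hd_inv_pow (n : ℕ) {z : ℂ} (hz : z ≠ 0) :
    HasDerivAt (fun z : ℂ => z⁻¹ ^ n) (-((n : ℂ) * z⁻¹ ^ (n + 1))) z := by
  have h : HasDerivAt (fun z : ℂ => z⁻¹ ^ n) ((n : ℂ) * z⁻¹ ^ (n - 1) * -(z ^ 2)⁻¹) z :=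
    (hasDerivAt_pow n z⁻¹).comp z (hasDerivAt_inv hz)
  convert h using 1
  rcases Nat.eq_zero_or_pos n with h0 | h0
  · simp [h0]
  · have key : z⁻¹ ^ (n + 1) = z⁻¹ ^ (n - 1) * (z ^ 2)⁻¹ := by
      rw [← inv_pow, ← pow_add]; congr 1; omega
    rw [key]; ring

lemma cast_mul_pred (n : ℕ) : (n : ℂ) * ((n - 1 : ℕ) : ℂ) = (n : ℂ) ^ 2 - n := by
  cases n with
  | zero => simp
  | succ m => push_cast [Nat.succ_sub_one]; ring


noncomputable def dA (r s : ℕ) (α : Fin r → ℕ) (z : ℂ) : ℂ :=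
  ∑ j, ((α j : ℂ) * z⁻¹ ^ (α j + 1) - (α j : ℂ) * z ^ (α j - 1))

lemma hasDerivAt_lpA (r s : ℕ) (α : Fin r → ℕ) {z : ℂ} (hz : z ≠ 0) :
    HasDerivAt (lpA r s α) (dA r s α z) z := by
  have h : HasDerivAt (fun z : ℂ => ((2 * r + s : ℕ) : ℂ) - ∑ j, (z ^ α j + z⁻¹ ^ α j))
      (0 - ∑ j, ((α j : ℂ) * z ^ (α j - 1) + -((α j : ℂ) * z⁻¹ ^ (α j + 1)))) z :=
    (hasDerivAt_const z _).sub (HasDerivAt.fun_sum fun j _ =>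
      (hasDerivAt_pow (α j) z).add (hd_inv_pow (α j) hz))
  convert h using 1
  · rfl
  rw [zero_sub, ← Finset.sum_neg_distrib]
  exact Finset.sum_congr rfl fun j _ => by ring


noncomputable def dC (s : ℕ) (γ : Fin s → ℕ) (z : ℂ) : ℂ := ∑ j, (γ j : ℂ) * z ^ (γ j - 1)

noncomputable def dCi (s : ℕ) (γ : Fin s → ℕ) (z : ℂ) : ℂ := -∑ j, (γ j : ℂ) * z⁻¹ ^ (γ j + 1)

lemma hasDerivAt_lpC (s : ℕ) (γ : Fin s → ℕ) (z : ℂ) :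
    HasDerivAt (lpC s γ) (dC s γ z) z :=
  HasDerivAt.fun_sum fun j _ => hasDerivAt_pow (γ j) z

lemma hasDerivAt_lpCi (s : ℕ) (γ : Fin s → ℕ) {z : ℂ} (hz : z ≠ 0) :
    HasDerivAt (fun z => lpC s γ z⁻¹) (dCi s γ z) z := by
  have h : HasDerivAt (fun z : ℂ => ∑ j, z⁻¹ ^ γ j)
      (∑ j, -((γ j : ℂ) * z⁻¹ ^ (γ j + 1))) z :=
    HasDerivAt.fun_sum fun j _ => hd_inv_pow (γ j) hz
  convert h using 1
  · rfl
  simp [dCi]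

noncomputable def dP1 (r t s : ℕ) (α : Fin r → ℕ) (β : Fin t → ℕ) (γ : Fin s → ℕ)
    (z : ℂ) : ℂ :=
  (dA r s α z * lpA t s β z + lpA r s α z * dA t s β z)
    - (dC s γ z * lpC s γ z⁻¹ + lpC s γ z * dCi s γ z)

lemma hasDerivAt_dP1 (r t s : ℕ) (α : Fin r → ℕ) (β : Fin t → ℕ) (γ : Fin s → ℕ)
    {z : ℂ} (hz : z ≠ 0) :
    HasDerivAt (fun z => lpA r s α z * lpA t s β z - lpC s γ z * lpC s γ z⁻¹)
      (dP1 r t s α β γ z) z :=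
  ((hasDerivAt_lpA r s α hz).mul (hasDerivAt_lpA t s β hz)).sub
    ((hasDerivAt_lpC s γ z).mul (hasDerivAt_lpCi s γ hz))

lemma hasDerivAt_dA_one (r s : ℕ) (α : Fin r → ℕ) (hα1 : ∀ j, 1 ≤ α j) :
    HasDerivAt (dA r s α) (-2 * ∑ j, (α j : ℂ) ^ 2) 1 := by
  have h : HasDerivAt (dA r s α)
      (∑ j, ((α j : ℂ) * -(((α j + 1 : ℕ) : ℂ) * (1:ℂ)⁻¹ ^ (α j + 1 + 1))
        - (α j : ℂ) * (((α j - 1 : ℕ) : ℂ) * (1:ℂ) ^ (α j - 1 - 1)))) 1 :=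
    HasDerivAt.fun_sum fun j _ => ((hd_inv_pow (α j + 1) one_ne_zero).const_mul _).sub
      ((hasDerivAt_pow (α j - 1) 1).const_mul _)
  convert h using 1
  rw [Finset.mul_sum]
  refine Finset.sum_congr rfl fun j _ => ?_
  rw [Nat.cast_sub (hα1 j)]
  push_cast
  simp only [inv_one, one_pow, mul_one]
  ring

lemma hasDerivAt_dC_one (s : ℕ) (γ : Fin s → ℕ) :
    HasDerivAt (dC s γ) (∑ j, ((γ j : ℂ) ^ 2 - γ j)) 1 := by
  have h : HasDerivAt (dC s γ)
      (∑ j, (γ j : ℂ) * (((γ j - 1 : ℕ) : ℂ) * (1:ℂ) ^ (γ j - 1 - 1))) 1 :=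
    HasDerivAt.fun_sum fun j _ => (hasDerivAt_pow (γ j - 1) 1).const_mul _
  convert h using 1
  refine Finset.sum_congr rfl fun j _ => ?_
  simp only [one_pow, mul_one]
  rw [cast_mul_pred]

lemma hasDerivAt_dCi_one (s : ℕ) (γ : Fin s → ℕ) :
    HasDerivAt (dCi s γ) (∑ j, ((γ j : ℂ) ^ 2 + γ j)) 1 := by
  have h : HasDerivAt (fun z => -∑ j, (γ j : ℂ) * z⁻¹ ^ (γ j + 1))
      (-∑ j, (γ j : ℂ) * -(((γ j + 1 : ℕ) : ℂ) * (1:ℂ)⁻¹ ^ (γ j + 1 + 1))) 1 :=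
    (HasDerivAt.fun_sum fun j _ => (hd_inv_pow (γ j + 1) one_ne_zero).const_mul _).neg
  convert h using 1
  · rfl
  rw [← Finset.sum_neg_distrib]
  refine Finset.sum_congr rfl fun j _ => ?_
  push_cast
  simp only [inv_one, one_pow, mul_one]
  ring

lemma pair_id (s : ℕ) (g : Fin s → ℤ) :
    ∑ p ∈ Finset.univ.filter (fun p : Fin s × Fin s => p.1 < p.2), (g p.1 - g p.2) ^ 2
    = (s : ℤ) * ∑ j, g j ^ 2 - (∑ j, g j) ^ 2 := by
  have htot : ∑ p : Fin s × Fin s, (g p.1 - g p.2) ^ 2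
      = 2 * ((s : ℤ) * ∑ j, g j ^ 2 - (∑ j, g j) ^ 2) := by
    rw [Fintype.sum_prod_type]
    have hrow : ∀ i, ∑ j, (g i - g j) ^ 2
        = (s : ℤ) * g i ^ 2 + ∑ j, g j ^ 2 - 2 * g i * ∑ j, g j := by
      intro i
      have : ∀ j, (g i - g j) ^ 2 = g i ^ 2 + g j ^ 2 - 2 * g i * g j := fun j => by ring
      simp_rw [this]
      rw [Finset.sum_sub_distrib, Finset.sum_add_distrib, Finset.sum_const,
        Finset.card_univ, Fintype.card_fin, ← Finset.mul_sum]
      ring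
    simp_rw [hrow]
    rw [Finset.sum_sub_distrib, Finset.sum_add_distrib, Finset.sum_const,
      Finset.card_univ, Fintype.card_fin, ← Finset.sum_mul, ← Finset.mul_sum]
    simp_rw [two_mul, Finset.sum_add_distrib]
    ring
  have hsplit := Finset.sum_filter_add_sum_filter_not Finset.univ
    (fun p : Fin s × Fin s => p.1 < p.2) (fun p => (g p.1 - g p.2) ^ 2)
  have hswap : ∑ p ∈ Finset.univ.filter (fun p : Fin s × Fin s => ¬ p.1 < p.2),
      (g p.1 - g p.2) ^ 2
      = ∑ p ∈ Finset.univ.filter (fun p : Fin s × Fin s => p.1 < p.2), (g p.1 - g p.2) ^ 2 := by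
    have h1 : ∑ p ∈ Finset.univ.filter (fun p : Fin s × Fin s => ¬ p.1 < p.2),
        (g p.1 - g p.2) ^ 2
        = ∑ p ∈ Finset.univ.filter (fun p : Fin s × Fin s => p.2 < p.1), (g p.1 - g p.2) ^ 2 := by
      refine (Finset.sum_subset ?_ ?_).symm
      · intro p hp
        simp only [Finset.mem_filter, Finset.mem_univ, true_and] at hp ⊢
        omega
      · intro p hp hnp
        simp only [Finset.mem_filter, Finset.mem_univ, true_and] at hp hnp
        have : p.1 = p.2 := le_antisymm (not_lt.mp hnp) (not_lt.mp hp)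
        rw [this]; ring
    rw [h1]
    refine Finset.sum_equiv (Equiv.prodComm (Fin s) (Fin s)) ?_ ?_
    · intro p; simp
    · intro p _; simp only [Equiv.prodComm_apply, Prod.fst_swap, Prod.snd_swap]; ring
  rw [hswap] at hsplit
  linarith


theorem stmt_3 (r t s : ℕ) (hs : 1 ≤ s)
    (α : Fin r → ℕ) (hα1 : ∀ j, 1 ≤ α j) (hαmono : StrictMono α)
    (β : Fin t → ℕ) (hβ1 : ∀ j, 1 ≤ β j) (hβmono : StrictMono β)
    (γ : Fin s → ℕ) (hγmono : StrictMono γ) :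
    lpP1 r t s α β γ 1 = 0 ∧
    deriv (lpP1 r t s α β γ) 1 = 0 ∧
    iteratedDeriv 2 (lpP1 r t s α β γ) 1 = ((-2 * qVal r t s α β γ : ℤ) : ℂ) ∧
    ((0 < r ∨ 0 < t ∨ ¬ (∀ i j, γ i = γ j)) →
      (iteratedDeriv 2 (lpP1 r t s α β γ) 1).re < 0) := by
  have h10 : (1 : ℂ) ≠ 0 := one_ne_zero
  have vA : ∀ (r' : ℕ) (δ : Fin r' → ℕ), lpA r' s δ 1 = s := by
    intro r' δ
    simp only [lpA, one_pow, inv_one, Finset.sum_const, Finset.card_univ, Fintype.card_fin,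
      nsmul_eq_mul]
    push_cast
    ring
  have vdA : ∀ (r' : ℕ) (δ : Fin r' → ℕ), dA r' s δ 1 = 0 := by
    intro r' δ; simp [dA]
  have vC : lpC s γ 1 = s := by simp [lpC]
  have vdC : dC s γ 1 = ∑ j, (γ j : ℂ) := by simp [dC]
  have vdCi : dCi s γ 1 = -∑ j, (γ j : ℂ) := by simp [dCi]
  have hP1 : ∀ z : ℂ, z ≠ 0 → HasDerivAt (lpP1 r t s α β γ) (dP1 r t s α β γ z) z :=
    fun z hz => hasDerivAt_dP1 r t s α β γ hz
  have e1 : lpP1 r t s α β γ 1 = 0 := by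
    rw [lpP1, inv_one, vA, vA, vC]; ring
  have e2 : deriv (lpP1 r t s α β γ) 1 = 0 := by
    rw [(hP1 1 h10).deriv, dP1, inv_one, vA, vA, vdA, vdA, vdC, vdCi, vC]; ring
  have hev : deriv (lpP1 r t s α β γ) =ᶠ[nhds 1] dP1 r t s α β γ := by
    filter_upwards [IsOpen.mem_nhds isOpen_compl_singleton
      (by simp : (1 : ℂ) ∈ ({0}ᶜ : Set ℂ))] with z hz
    exact (hP1 z hz).deriv
  have hdd : HasDerivAt (dP1 r t s α β γ)
      (((-2 * ∑ j, (α j : ℂ) ^ 2) * lpA t s β 1 + dA r s α 1 * dA t s β 1)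
       + (dA r s α 1 * dA t s β 1 + lpA r s α 1 * (-2 * ∑ j, (β j : ℂ) ^ 2))
       - (((∑ j, ((γ j : ℂ) ^ 2 - γ j)) * lpC s γ 1⁻¹ + dC s γ 1 * dCi s γ 1)
         + (dC s γ 1 * dCi s γ 1 + lpC s γ 1 * (∑ j, ((γ j : ℂ) ^ 2 + γ j))))) 1 :=
    (((hasDerivAt_dA_one r s α hα1).mul (hasDerivAt_lpA t s β h10)).add
      ((hasDerivAt_lpA r s α h10).mul (hasDerivAt_dA_one t s β hβ1))).sub
      (((hasDerivAt_dC_one s γ).mul (hasDerivAt_lpCi s γ h10)).add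
        ((hasDerivAt_lpC s γ 1).mul (hasDerivAt_dCi_one s γ)))
  have e3 : iteratedDeriv 2 (lpP1 r t s α β γ) 1 = ((-2 * qVal r t s α β γ : ℤ) : ℂ) := by
    rw [show (2 : ℕ) = 1 + 1 from rfl, iteratedDeriv_succ, iteratedDeriv_one,
      hev.deriv_eq, hdd.deriv, vA, vA, vdA, vdA, vdC, vdCi, inv_one, vC]
    rw [qVal, pair_id s (fun i => (γ i : ℤ))]
    rw [Finset.sum_sub_distrib, Finset.sum_add_distrib]
    push_cast
    ring
  refine ⟨e1, e2, e3, fun h => ?_⟩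
  have hA0 : 0 ≤ (s : ℤ) * ∑ j, (α j : ℤ) ^ 2 :=
    mul_nonneg (by positivity) (Finset.sum_nonneg fun j _ => sq_nonneg _)
  have hB0 : 0 ≤ (s : ℤ) * ∑ j, (β j : ℤ) ^ 2 :=
    mul_nonneg (by positivity) (Finset.sum_nonneg fun j _ => sq_nonneg _)
  have hC0 : 0 ≤ ∑ p ∈ Finset.univ.filter (fun p : Fin s × Fin s => p.1 < p.2),
      ((γ p.1 : ℤ) - (γ p.2 : ℤ)) ^ 2 := Finset.sum_nonneg fun p _ => sq_nonneg _
  have hspos : (0 : ℤ) < s := by exact_mod_cast hs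
  have hq : 0 < qVal r t s α β γ := by
    rcases h with hr | ht | hγ
    · have hsum : 0 < ∑ j, (α j : ℤ) ^ 2 := by
        refine Finset.sum_pos' (fun j _ => sq_nonneg _) ⟨⟨0, hr⟩, Finset.mem_univ _, ?_⟩
        have := hα1 ⟨0, hr⟩
        positivity
      have : 0 < (s : ℤ) * ∑ j, (α j : ℤ) ^ 2 := mul_pos hspos hsum
      unfold qVal; linarith
    · have hsum : 0 < ∑ j, (β j : ℤ) ^ 2 := by
        refine Finset.sum_pos' (fun j _ => sq_nonneg _) ⟨⟨0, ht⟩, Finset.mem_univ _, ?_⟩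
        have := hβ1 ⟨0, ht⟩
        positivity
      have : 0 < (s : ℤ) * ∑ j, (β j : ℤ) ^ 2 := mul_pos hspos hsum
      unfold qVal; linarith
    · push_neg at hγ
      obtain ⟨i, j, hij⟩ := hγ
      have hne : i ≠ j := fun hh => hij (hh ▸ rfl)
      have key : ∃ p : Fin s × Fin s, p.1 < p.2 ∧ γ p.1 ≠ γ p.2 := by
        rcases lt_or_gt_of_ne hne with hlt | hgt
        · exact ⟨(i, j), hlt, hij⟩
        · exact ⟨(j, i), hgt, fun hh => hij hh.symm⟩
      obtain ⟨p, hp1, hp2⟩ := key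
      have hsum : 0 < ∑ p ∈ Finset.univ.filter (fun p : Fin s × Fin s => p.1 < p.2),
          ((γ p.1 : ℤ) - (γ p.2 : ℤ)) ^ 2 := by
        refine Finset.sum_pos' (fun q _ => sq_nonneg _)
          ⟨p, Finset.mem_filter.mpr ⟨Finset.mem_univ _, hp1⟩, ?_⟩
        have : ((γ p.1 : ℤ) - (γ p.2 : ℤ)) ≠ 0 := by
          intro hh
          exact hp2 (by exact_mod_cast sub_eq_zero.mp hh)
        positivity
      unfold qVal; linarith
  rw [e3]
  have hre : ((-2 * qVal r t s α β γ : ℤ) : ℂ).re = ((-2 * qVal r t s α β γ : ℤ) : ℝ) := by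
    simp
  rw [hre]
  have : (-2 * qVal r t s α β γ : ℤ) < 0 := by linarith
  exact_mod_cast this
end

section
/- Let g(z) be a monic polynomial of degree 2k with integer coefficients whose complex roots, counted with multiplicity, are ξ_1, …, ξ_{2k}. Then there exist polynomials p(x) and Q(x) with integer coefficients and Q(0) = 1 such that the formal power series F(x) = Σ_{n=1}^∞ n · ∏_{j=1}^{2k} (ξ_j^n − 1) · x^n equals the power series expansion of p(x)/Q(x); moreover, if ξ_{j+k} = ξ_j^{−1} for j = 1, …, k, then the rational function satisfies p(x)/Q(x) = p(1/x)/Q(1/x) as elements of the field of rational functions. -/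
open Polynomial

namespace Stmt18Aux

lemma geom (β : ℂ) :
    (1 - PowerSeries.C β * PowerSeries.X) * PowerSeries.mk (fun n => β ^ n) = 1 := by
  ext n
  rw [sub_mul, one_mul, map_sub, mul_assoc]
  cases n with
  | zero => simp
  | succ m =>
    rw [PowerSeries.coeff_C_mul, PowerSeries.coeff_succ_X_mul]
    simp [pow_succ]
    ring

lemma mk_n_pow (β : ℂ) :
    PowerSeries.mk (fun n => (n : ℂ) * β ^ n) =
      PowerSeries.C β * PowerSeries.X * (PowerSeries.mk (fun n => β ^ n)) ^ 2 := by
  have hsq : (PowerSeries.mk (fun n => β ^ n)) ^ 2 =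
      PowerSeries.mk (fun n => ((n : ℂ) + 1) * β ^ n) := by
    ext n
    rw [sq, PowerSeries.coeff_mul]
    simp only [PowerSeries.coeff_mk]
    have hc : ∀ p ∈ Finset.HasAntidiagonal.antidiagonal n, β ^ p.1 * β ^ p.2 = β ^ n := fun p hp => by
      rw [← pow_add, Finset.HasAntidiagonal.mem_antidiagonal.mp hp]
    rw [Finset.sum_congr rfl hc, Finset.sum_const, Finset.Nat.card_antidiagonal, nsmul_eq_mul]
    push_cast
    ring
  rw [hsq]
  ext n
  rw [mul_assoc, PowerSeries.coeff_C_mul]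
  cases n with
  | zero => simp
  | succ m =>
    rw [PowerSeries.coeff_succ_X_mul, PowerSeries.coeff_mk, PowerSeries.coeff_mk]
    push_cast
    ring

lemma key1 (β : ℂ) :
    (1 - PowerSeries.C β * PowerSeries.X) ^ 2 * PowerSeries.mk (fun n => (n : ℂ) * β ^ n) =
      PowerSeries.C β * PowerSeries.X := by
  rw [mk_n_pow]
  have : (1 - PowerSeries.C β * PowerSeries.X) ^ 2 *
      (PowerSeries.C β * PowerSeries.X * (PowerSeries.mk (fun n => β ^ n)) ^ 2) =
      PowerSeries.C β * PowerSeries.X *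
        ((1 - PowerSeries.C β * PowerSeries.X) * PowerSeries.mk (fun n => β ^ n)) ^ 2 := by
    ring
  rw [this, geom, one_pow, mul_one]

lemma symInt {m : ℕ} (g : Polynomial ℤ)
    (ξ : Fin m → ℂ) (hroots : g.map (Int.castRingHom ℂ) = ∏ j, (X - C (ξ j)))
    (P : MvPolynomial (Fin m) ℤ) (hP : P.IsSymmetric) :
    ∃ c : ℤ, MvPolynomial.aeval ξ P = (c : ℂ) := by
  set s : Multiset ℂ := Finset.univ.val.map ξ with hs
  have hcard : Multiset.card s = m := by simp [hs]
  have hesymm : ∀ n : ℕ, n ≤ m → s.esymm n = (((-1 : ℤ) ^ n * g.coeff (m - n) : ℤ) : ℂ) := by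
    intro n hn
    have h1 : (∏ j, (X - C (ξ j))) = (s.map fun t => X - C t).prod := by
      rw [hs, Multiset.map_map]
      rfl
    have h2 := Multiset.prod_X_sub_C_coeff s (k := m - n) (by omega)
    rw [← h1, ← hroots, hcard, Nat.sub_sub_self hn] at h2
    have h3 : (g.map (Int.castRingHom ℂ)).coeff (m - n) = ((g.coeff (m - n) : ℤ) : ℂ) := by
      simp [Polynomial.coeff_map]
    rw [h3] at h2
    have h4 : ((-1 : ℂ)) ^ n * ((-1 : ℂ)) ^ n = 1 := by
      rw [← pow_add, ← two_mul, pow_mul]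
      norm_num
    push_cast
    calc s.esymm n = ((-1 : ℂ) ^ n * (-1 : ℂ) ^ n) * s.esymm n := by rw [h4, one_mul]
    _ = (-1 : ℂ) ^ n * ((-1 : ℂ) ^ n * s.esymm n) := by ring
    _ = (-1 : ℂ) ^ n * ((g.coeff (m - n) : ℂ)) := by rw [← h2]
  set e : Fin m → ℤ := fun i => (-1) ^ ((i : ℕ) + 1) * g.coeff (m - ((i : ℕ) + 1)) with he
  have hev : ∀ i : Fin m,
      MvPolynomial.aeval ξ (MvPolynomial.esymm (Fin m) ℤ ((i : ℕ) + 1)) = ((e i : ℤ) : ℂ) := by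
    intro i
    rw [MvPolynomial.aeval_esymm_eq_multiset_esymm, ← hs, hesymm _ (by omega)]
  obtain ⟨q, hq⟩ := MvPolynomial.esymmAlgHom_surjective (σ := Fin m) (R := ℤ) (n := m)
    (by simp) ⟨P, hP⟩
  have hPq : P = MvPolynomial.aeval
      (fun i : Fin m => MvPolynomial.esymm (Fin m) ℤ ((i : ℕ) + 1)) q := by
    have := congrArg Subtype.val hq
    rw [MvPolynomial.esymmAlgHom_apply] at this
    exact this.symm
  refine ⟨MvPolynomial.aeval e q, ?_⟩
  rw [hPq]
  have hcomp := MvPolynomial.comp_aeval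
    (f := fun i : Fin m => MvPolynomial.esymm (Fin m) ℤ ((i : ℕ) + 1))
    (φ := MvPolynomial.aeval (R := ℤ) ξ)
  have h5 : MvPolynomial.aeval ξ (MvPolynomial.aeval
      (fun i : Fin m => MvPolynomial.esymm (Fin m) ℤ ((i : ℕ) + 1)) q)
      = MvPolynomial.aeval (fun i : Fin m => ((e i : ℤ) : ℂ)) q := by
    rw [← AlgHom.comp_apply, hcomp]
    simp_rw [hev]
  rw [h5]
  have hcomp2 := MvPolynomial.comp_aeval (f := e)
    (φ := (Int.castRingHom ℂ).toIntAlgHom)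
  calc MvPolynomial.aeval (fun i : Fin m => ((e i : ℤ) : ℂ)) q
      = (Int.castRingHom ℂ).toIntAlgHom.comp (MvPolynomial.aeval e) q := by
        rw [hcomp2]; rfl
    _ = ((MvPolynomial.aeval e q : ℤ) : ℂ) := rfl

lemma coe_map_PS {R S : Type*} [CommSemiring R] [CommSemiring S] (f : R →+* S) (q : R[X]) :
    PowerSeries.map f (q : PowerSeries R) = ((q.map f : S[X]) : PowerSeries S) := by
  ext n
  simp [Polynomial.coeff_coe, Polynomial.coeff_map]

lemma sum_div_prod {K : Type*} [Field K] {ι : Type*} [Fintype ι] [DecidableEq ι]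
    (a m : ι → K) (hm : ∀ T, m T ≠ 0) :
    (∑ S, a S * ∏ T ∈ Finset.univ.erase S, m T) / (∏ T, m T) = ∑ S, a S / m S := by
  rw [Finset.sum_div]
  refine Finset.sum_congr rfl fun S _ => ?_
  have hP : (∏ T ∈ Finset.univ.erase S, m T) ≠ 0 :=
    Finset.prod_ne_zero_iff.2 fun T _ => hm T
  rw [← Finset.mul_prod_erase Finset.univ m (Finset.mem_univ S), mul_div_mul_comm,
    div_self hP, mul_one]

lemma reflect_ratfunc {K : Type*} [Field K] (q : K[X]) {d : ℕ} (hd : q.natDegree ≤ d) :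
    algebraMap (Polynomial K) (RatFunc K) (q.reflect d) =
      RatFunc.X ^ d * Polynomial.aeval (RatFunc.X⁻¹ : RatFunc K) q := by
  have hAM : (algebraMap (Polynomial K) (RatFunc K)) =
      Polynomial.eval₂RingHom (algebraMap K (RatFunc K)) RatFunc.X := by
    apply Polynomial.ringHom_ext
    · intro a
      simp [RatFunc.algebraMap_C, RatFunc.algebraMap_eq_C]
    · simp [RatFunc.algebraMap_X]
  have : Invertible (RatFunc.X⁻¹ : RatFunc K) :=
    invertibleOfNonzero (inv_ne_zero RatFunc.X_ne_zero)
  have hinv : (⅟(RatFunc.X⁻¹ : RatFunc K)) = RatFunc.X := by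
    rw [invOf_eq_inv, inv_inv]
  have h := Polynomial.eval₂_reflect_mul_pow (algebraMap K (RatFunc K))
    (RatFunc.X⁻¹ : RatFunc K) d q hd
  rw [hinv] at h
  rw [hAM]
  rw [Polynomial.coe_eval₂RingHom]
  rw [Polynomial.aeval_def, ← h, mul_comm (RatFunc.X ^ d) _, mul_assoc, ← mul_pow,
    inv_mul_cancel₀ RatFunc.X_ne_zero, one_pow, mul_one]

lemma termwise {K : Type*} [Field K] (γ : K) :
    algebraMap K (RatFunc K) γ * RatFunc.X / (1 - algebraMap K (RatFunc K) γ * RatFunc.X) ^ 2 =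
      algebraMap K (RatFunc K) γ⁻¹ * RatFunc.X⁻¹ /
        (1 - algebraMap K (RatFunc K) γ⁻¹ * RatFunc.X⁻¹) ^ 2 := by
  set i := algebraMap K (RatFunc K)
  set x := (RatFunc.X : RatFunc K) with hxdef
  have hx : x ≠ 0 := RatFunc.X_ne_zero
  rcases eq_or_ne γ 0 with h0 | h0
  · simp [h0]
  have hb : i γ ≠ 0 := by
    simpa using (RingHom.injective i).ne_iff.2 h0
  have hiinv : i γ⁻¹ = (i γ)⁻¹ := map_inv₀ i γ
  have h1 : (1 : RatFunc K) - i γ * x ≠ 0 := by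
    have : (1 : RatFunc K) - i γ * x = algebraMap (Polynomial K) (RatFunc K)
        (1 - Polynomial.C γ * Polynomial.X) := by
      rw [map_sub, map_one, map_mul, RatFunc.algebraMap_C, RatFunc.algebraMap_X,
        ← RatFunc.algebraMap_eq_C]
    rw [this]
    apply RatFunc.algebraMap_ne_zero
    intro hcon
    have := congrArg (fun r => Polynomial.coeff r 0) hcon
    simp at this
  have h2 : (1 : RatFunc K) - i γ⁻¹ * x⁻¹ ≠ 0 := by
    have heq : (1 : RatFunc K) - i γ⁻¹ * x⁻¹ = x⁻¹ * (x - i γ⁻¹) := by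
      rw [mul_sub, inv_mul_cancel₀ hx]
      ring
    rw [heq]
    apply mul_ne_zero (inv_ne_zero hx)
    have : x - i γ⁻¹ = algebraMap (Polynomial K) (RatFunc K) (Polynomial.X - Polynomial.C γ⁻¹) := by
      rw [map_sub, RatFunc.algebraMap_C, RatFunc.algebraMap_X, ← RatFunc.algebraMap_eq_C]
    rw [this]
    exact RatFunc.algebraMap_ne_zero (Polynomial.X_sub_C_ne_zero γ⁻¹)
  rw [hiinv]
  rw [div_eq_div_iff (pow_ne_zero 2 h1) (by rw [← hiinv]; exact pow_ne_zero 2 h2)]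
  field_simp
  ring

lemma one_sub_CX_ne {K : Type*} [Field K] (γ : K) :
    (1 : RatFunc K) - algebraMap K (RatFunc K) γ * RatFunc.X ≠ 0 := by
  have : (1 : RatFunc K) - algebraMap K (RatFunc K) γ * RatFunc.X =
      algebraMap (Polynomial K) (RatFunc K) (1 - Polynomial.C γ * Polynomial.X) := by
    rw [map_sub, map_one, map_mul, RatFunc.algebraMap_C, RatFunc.algebraMap_X,
      ← RatFunc.algebraMap_eq_C]
  rw [this]
  apply RatFunc.algebraMap_ne_zero
  intro hcon
  have := congrArg (fun r => Polynomial.coeff r 0) hcon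
  simp at this

lemma one_sub_CXinv_ne {K : Type*} [Field K] (γ : K) :
    (1 : RatFunc K) - algebraMap K (RatFunc K) γ * (RatFunc.X : RatFunc K)⁻¹ ≠ 0 := by
  have hx : (RatFunc.X : RatFunc K) ≠ 0 := RatFunc.X_ne_zero
  have heq : (1 : RatFunc K) - algebraMap K (RatFunc K) γ * (RatFunc.X : RatFunc K)⁻¹ =
      (RatFunc.X : RatFunc K)⁻¹ * (RatFunc.X - algebraMap K (RatFunc K) γ) := by
    rw [mul_sub, inv_mul_cancel₀ hx]
    ring
  rw [heq]
  apply mul_ne_zero (inv_ne_zero hx)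
  have : (RatFunc.X : RatFunc K) - algebraMap K (RatFunc K) γ =
      algebraMap (Polynomial K) (RatFunc K) (Polynomial.X - Polynomial.C γ) := by
    rw [map_sub, RatFunc.algebraMap_C, RatFunc.algebraMap_X, ← RatFunc.algebraMap_eq_C]
  rw [this]
  exact RatFunc.algebraMap_ne_zero (Polynomial.X_sub_C_ne_zero γ)

def swapHalf (k : ℕ) : Fin (2*k) → Fin (2*k) := fun j =>
  if h : (j : ℕ) < k then ⟨(j : ℕ) + k, by omega⟩
  else ⟨(j : ℕ) - k, by have := j.isLt; omega⟩

lemma swapHalf_invol (k : ℕ) : Function.Involutive (swapHalf k) := by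
  intro j
  have hj := j.isLt
  unfold swapHalf
  by_cases h : (j : ℕ) < k
  · rw [dif_pos h, dif_neg (by simp)]
    apply Fin.ext
    simp
  · rw [dif_neg h, dif_pos (by simp; omega)]
    apply Fin.ext
    simp
    omega

end Stmt18Aux

open Stmt18Aux

set_option maxHeartbeats 1000000 in
theorem stmt_18 (k : ℕ) (g : Polynomial ℤ) (hmonic : g.Monic) (hdeg : g.natDegree = 2 * k)
    (ξ : Fin (2 * k) → ℂ)
    (hroots : g.map (Int.castRingHom ℂ) = ∏ j, (Polynomial.X - Polynomial.C (ξ j))) :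
    ∃ (p Q : Polynomial ℤ) (F : PowerSeries ℤ),
      Q.coeff 0 = 1 ∧
      -- `F(x) = Σ_{n≥1} n ∏_j (ξ_jⁿ − 1) xⁿ` equals the power series expansion of `p/Q`:
      (Q : PowerSeries ℤ) * F = (p : PowerSeries ℤ) ∧
      PowerSeries.coeff 0 F = 0 ∧
      (∀ n : ℕ, 1 ≤ n →
        ((PowerSeries.coeff n F : ℤ) : ℂ) = (n : ℂ) * ∏ j, (ξ j ^ n - 1)) ∧
      -- moreover, if `ξ_{j+k} = ξ_j⁻¹` for `j = 1, …, k`, then `p(x)/Q(x) = p(1/x)/Q(1/x)`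
      -- in the field of rational functions:
      ((∀ j : Fin (2 * k), (h : (j : ℕ) < k) →
          ξ ⟨(j : ℕ) + k, by omega⟩ = (ξ j)⁻¹) →
        (algebraMap (Polynomial ℚ) (RatFunc ℚ) (p.map (Int.castRingHom ℚ))) /
            (algebraMap (Polynomial ℚ) (RatFunc ℚ) (Q.map (Int.castRingHom ℚ))) =
          (Polynomial.aeval (RatFunc.X⁻¹ : RatFunc ℚ) (p.map (Int.castRingHom ℚ))) /
            (Polynomial.aeval (RatFunc.X⁻¹ : RatFunc ℚ) (Q.map (Int.castRingHom ℚ)))) := by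
  classical
  -- integer sequence b
  have hbsym : ∀ n : ℕ, (∏ j, ((MvPolynomial.X j : MvPolynomial (Fin (2*k)) ℤ) ^ n - 1)).IsSymmetric := by
    intro n e
    rw [map_prod]
    simp_rw [map_sub, map_pow, MvPolynomial.rename_X, map_one]
    exact Equiv.prod_comp e (fun j => (MvPolynomial.X j : MvPolynomial (Fin (2*k)) ℤ) ^ n - 1)
  choose b hb0 using fun n => symInt g ξ hroots _ (hbsym n)
  have hb : ∀ n : ℕ, ((b n : ℤ) : ℂ) = ∏ j, (ξ j ^ n - 1) := by
    intro n
    rw [← hb0 n, map_prod]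
    simp
  -- the beta and epsilon functions
  set β : Finset (Fin (2*k)) → ℂ := fun S => ∏ j ∈ S, ξ j with hβ
  set ε : Finset (Fin (2*k)) → ℂ := fun S => (-1 : ℂ) ^ (2 * k - S.card) with hε
  -- expansion of the product
  have hexp : ∀ n : ℕ, ∏ j, (ξ j ^ n - 1) = ∑ S : Finset (Fin (2*k)), ε S * (β S) ^ n := by
    intro n
    have h1 : ∀ j : Fin (2*k), ξ j ^ n - 1 = ξ j ^ n + (-1) := by intro j; ring
    rw [Finset.prod_congr rfl (fun j _ => h1 j), Finset.prod_add]
    rw [← Finset.powerset_univ]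
    refine Finset.sum_congr rfl fun S hS => ?_
    rw [Finset.prod_const, Finset.prod_pow,
      Finset.card_sdiff_of_subset (Finset.mem_powerset.1 hS), Finset.card_univ, Fintype.card_fin, mul_comm]
  -- the integer polynomial Q
  set 𝒬 : Polynomial (MvPolynomial (Fin (2*k)) ℤ) :=
    ∏ S : Finset (Fin (2*k)), (1 - C (∏ j ∈ S, MvPolynomial.X j) * X) ^ 2 with h𝒬
  set Qc : Polynomial ℂ := ∏ S : Finset (Fin (2*k)), (1 - C (β S) * X) ^ 2 with hQc
  have h𝒬map : 𝒬.map (↑(MvPolynomial.aeval (R := ℤ) ξ) : MvPolynomial (Fin (2*k)) ℤ →+* ℂ)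
      = Qc := by
    rw [h𝒬, Polynomial.map_prod]
    refine Finset.prod_congr rfl fun S _ => ?_
    rw [Polynomial.map_pow, Polynomial.map_sub, Polynomial.map_one, Polynomial.map_mul,
      Polynomial.map_C, Polynomial.map_X]
    simp [hβ]
  have hQsym : ∀ i : ℕ, (𝒬.coeff i).IsSymmetric := by
    intro i e
    set ρ : MvPolynomial (Fin (2*k)) ℤ →+* MvPolynomial (Fin (2*k)) ℤ :=
      (MvPolynomial.rename (R := ℤ) e).toRingHom with hρ
    have hmape : 𝒬.map ρ = 𝒬 := by
      rw [h𝒬, Polynomial.map_prod]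
      have hterm : ∀ S : Finset (Fin (2*k)),
          Polynomial.map ρ ((1 - C (∏ j ∈ S, MvPolynomial.X j) * X) ^ 2)
          = (1 - C (∏ j ∈ S.map e.toEmbedding, MvPolynomial.X j) * X) ^ 2 := by
        intro S
        rw [Polynomial.map_pow, Polynomial.map_sub, Polynomial.map_one, Polynomial.map_mul,
          Polynomial.map_C, Polynomial.map_X]
        congr 2
        rw [hρ]
        simp only [AlgHom.toRingHom_eq_coe, RingHom.coe_coe]
        rw [map_prod, Finset.prod_map]
        simp
      rw [Finset.prod_congr rfl fun S _ => hterm S]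
      exact Equiv.prod_comp e.finsetCongr
        (fun S => (1 - C (∏ j ∈ S, MvPolynomial.X j) * X) ^ 2)
    have := congrArg (fun r => Polynomial.coeff r i) hmape
    simp only [Polynomial.coeff_map] at this
    exact this
  choose cQ hcQ using fun i => symInt g ξ hroots (𝒬.coeff i) (hQsym i)
  have hQcoeff : ∀ i : ℕ, Qc.coeff i = ((cQ i : ℤ) : ℂ) := by
    intro i
    rw [← h𝒬map, Polynomial.coeff_map]
    exact hcQ i
  set Q : Polynomial ℤ := ∑ i ∈ 𝒬.support, C (cQ i) * X ^ i with hQ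
  have hQco : ∀ i : ℕ, ((Q.coeff i : ℤ) : ℂ) = Qc.coeff i := by
    intro i
    rw [hQ, Polynomial.finset_sum_coeff]
    simp_rw [Polynomial.coeff_C_mul, Polynomial.coeff_X_pow, mul_ite, mul_one, mul_zero]
    rw [Finset.sum_ite_eq 𝒬.support i cQ]
    by_cases hi : i ∈ 𝒬.support
    · rw [if_pos hi, hQcoeff]
    · rw [if_neg hi, hQcoeff]
      have : 𝒬.coeff i = 0 := Polynomial.notMem_support_iff.1 hi
      rw [← hcQ i, this]
      simp
  have hQmap : Q.map (Int.castRingHom ℂ) = Qc := by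
    ext i
    rw [Polynomial.coeff_map]
    exact hQco i
  have hQc0 : Qc.coeff 0 = 1 := by
    rw [Polynomial.coeff_zero_eq_eval_zero, hQc, Polynomial.eval_prod]
    refine Finset.prod_eq_one fun S _ => by simp
  have hQ0 : Q.coeff 0 = 1 := by
    have := hQco 0
    rw [hQc0] at this
    exact_mod_cast this
  -- power series
  set F : PowerSeries ℤ := PowerSeries.mk fun n => (n : ℤ) * b n with hF
  have hφF : PowerSeries.map (Int.castRingHom ℂ) F
      = ∑ S : Finset (Fin (2*k)), PowerSeries.C (ε S) *
          PowerSeries.mk (fun n => (n : ℂ) * (β S) ^ n) := by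
    ext n
    rw [PowerSeries.coeff_map, hF, PowerSeries.coeff_mk, map_sum]
    simp only [map_mul, eq_intCast, Int.cast_natCast]
    rw [hb n, hexp n, Finset.mul_sum]
    refine Finset.sum_congr rfl fun S _ => ?_
    rw [PowerSeries.coeff_C_mul, PowerSeries.coeff_mk]
    ring
  set pc : Polynomial ℂ := ∑ S : Finset (Fin (2*k)),
      C (ε S * β S) * (X * ∏ T ∈ Finset.univ.erase S, (1 - C (β T) * X) ^ 2) with hpc
  have hQcPS : ((Q : Polynomial ℤ) : PowerSeries ℤ).map (Int.castRingHom ℂ)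
      = ((Qc : Polynomial ℂ) : PowerSeries ℂ) := by
    rw [coe_map_PS, hQmap]
  have hE2 : PowerSeries.map (Int.castRingHom ℂ) ((Q : PowerSeries ℤ) * F)
      = ((pc : Polynomial ℂ) : PowerSeries ℂ) := by
    rw [map_mul, hQcPS, hφF, Finset.mul_sum]
    have hterm : ∀ S : Finset (Fin (2*k)),
        ((Qc : Polynomial ℂ) : PowerSeries ℂ) *
          (PowerSeries.C (ε S) * PowerSeries.mk (fun n => (n : ℂ) * (β S) ^ n))
        = PowerSeries.C (ε S * β S) *
            (PowerSeries.X * ((∏ T ∈ Finset.univ.erase S, (1 - C (β T) * X) ^ 2 :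
              Polynomial ℂ) : PowerSeries ℂ)) := by
      intro S
      have hsplit : Qc = (1 - C (β S) * X) ^ 2 *
          ∏ T ∈ Finset.univ.erase S, (1 - C (β T) * X) ^ 2 :=
        (Finset.mul_prod_erase Finset.univ _ (Finset.mem_univ S)).symm
      have hcoe : (((1 - C (β S) * X) ^ 2 : Polynomial ℂ) : PowerSeries ℂ)
          = (1 - PowerSeries.C (β S) * PowerSeries.X) ^ 2 := by
        rw [Polynomial.coe_pow, Polynomial.coe_sub, Polynomial.coe_one, Polynomial.coe_mul,
          Polynomial.coe_C, Polynomial.coe_X]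
      rw [hsplit, Polynomial.coe_mul, hcoe]
      have := key1 (β S)
      calc (1 - PowerSeries.C (β S) * PowerSeries.X) ^ 2 *
            ((∏ T ∈ Finset.univ.erase S, (1 - C (β T) * X) ^ 2 : Polynomial ℂ) : PowerSeries ℂ) *
            (PowerSeries.C (ε S) * PowerSeries.mk (fun n => (n : ℂ) * (β S) ^ n))
          = PowerSeries.C (ε S) *
            (((∏ T ∈ Finset.univ.erase S, (1 - C (β T) * X) ^ 2 : Polynomial ℂ) : PowerSeries ℂ) *
              ((1 - PowerSeries.C (β S) * PowerSeries.X) ^ 2 *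
                PowerSeries.mk (fun n => (n : ℂ) * (β S) ^ n))) := by ring
        _ = PowerSeries.C (ε S) *
            (((∏ T ∈ Finset.univ.erase S, (1 - C (β T) * X) ^ 2 : Polynomial ℂ) : PowerSeries ℂ) *
              (PowerSeries.C (β S) * PowerSeries.X)) := by rw [this]
        _ = _ := by rw [map_mul (PowerSeries.C (R := ℂ))]; ring
    rw [Finset.sum_congr rfl fun S _ => hterm S, hpc]
    rw [← Polynomial.coeToPowerSeries.ringHom_apply, map_sum]
    refine Finset.sum_congr rfl fun S _ => ?_
    rw [Polynomial.coeToPowerSeries.ringHom_apply, Polynomial.coe_mul, Polynomial.coe_mul,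
      Polynomial.coe_C, Polynomial.coe_X]
  -- degree bound
  set D : ℕ := 2 * Fintype.card (Finset (Fin (2*k))) + 2 with hD
  have hpcdeg : pc.natDegree < D := by
    have : pc.natDegree ≤ 2 * Fintype.card (Finset (Fin (2*k))) + 1 := by
      rw [hpc]
      refine Polynomial.natDegree_sum_le_of_forall_le _ _ fun S _ => ?_
      refine (Polynomial.natDegree_mul_le).trans ?_
      rw [Polynomial.natDegree_C, zero_add]
      refine (Polynomial.natDegree_mul_le).trans ?_
      have h2 : (∏ T ∈ Finset.univ.erase S, (1 - C (β T) * X) ^ 2).natDegree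
          ≤ 2 * Fintype.card (Finset (Fin (2*k))) := by
        refine (Polynomial.natDegree_prod_le _ _).trans ?_
        have : ∀ T ∈ Finset.univ.erase S, ((1 - C (β T) * X) ^ 2).natDegree ≤ 2 := by
          intro T _
          refine (Polynomial.natDegree_pow_le).trans ?_
          have : (1 - C (β T) * X).natDegree ≤ 1 := by
            refine (Polynomial.natDegree_sub_le _ _).trans ?_
            simp [Polynomial.natDegree_one]
            exact Polynomial.natDegree_C_mul_le _ _ |>.trans (by simp)
          omega
        refine (Finset.sum_le_sum this).trans ?_
        rw [Finset.sum_const, smul_eq_mul]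
        have := Finset.card_erase_le (a := S) (s := (Finset.univ : Finset (Finset (Fin (2*k)))))
        have hcard := Finset.card_univ (α := Finset (Fin (2*k)))
        omega
      have hX : (X : Polynomial ℂ).natDegree ≤ 1 := Polynomial.natDegree_X_le
      omega
    omega
  -- the polynomial p
  set p : Polynomial ℤ := ∑ n ∈ Finset.range D,
      C (PowerSeries.coeff n ((Q : PowerSeries ℤ) * F)) * X ^ n with hp
  have hQFzero : ∀ n : ℕ, D ≤ n → PowerSeries.coeff n ((Q : PowerSeries ℤ) * F) = 0 := by
    intro n hn
    have h1 : ((PowerSeries.coeff n ((Q : PowerSeries ℤ) * F) : ℤ) : ℂ)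
        = PowerSeries.coeff n (PowerSeries.map (Int.castRingHom ℂ)
            ((Q : PowerSeries ℤ) * F)) := by
      rw [PowerSeries.coeff_map]
      rfl
    rw [hE2, Polynomial.coeff_coe] at h1
    rw [Polynomial.coeff_eq_zero_of_natDegree_lt (lt_of_lt_of_le hpcdeg hn)] at h1
    exact_mod_cast h1
  have hQFp : (Q : PowerSeries ℤ) * F = ((p : Polynomial ℤ) : PowerSeries ℤ) := by
    ext n
    have hcp : PowerSeries.coeff n ((p : Polynomial ℤ) : PowerSeries ℤ)
        = if n ∈ Finset.range D then PowerSeries.coeff n ((Q : PowerSeries ℤ) * F) else 0 := by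
      rw [Polynomial.coeff_coe, hp, Polynomial.finset_sum_coeff]
      simp_rw [Polynomial.coeff_C_mul, Polynomial.coeff_X_pow, mul_ite, mul_one, mul_zero]
      rw [Finset.sum_ite_eq (Finset.range D) n _]
    rw [hcp]
    by_cases hn : n ∈ Finset.range D
    · rw [if_pos hn]
    · rw [if_neg hn]
      exact hQFzero n (le_of_not_gt fun h => hn (Finset.mem_range.2 h))
  have hpmap : p.map (Int.castRingHom ℂ) = pc := by
    have h3 := hE2
    rw [hQFp, coe_map_PS] at h3
    exact Polynomial.coe_injective ℂ h3
  refine ⟨p, Q, F, hQ0, hQFp, by rw [hF]; simp, ?_, ?_⟩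
  · intro n hn
    have h1 : PowerSeries.coeff n F = (n : ℤ) * b n := by rw [hF, PowerSeries.coeff_mk]
    rw [h1]
    push_cast
    rw [hb n]
  -- the symmetry statement
  intro hsym
  have hπξ : ∀ j : Fin (2*k), ξ (swapHalf k j) = (ξ j)⁻¹ := by
    intro j
    have hj := j.isLt
    by_cases h : (j : ℕ) < k
    · have h1 : swapHalf k j = ⟨(j : ℕ) + k, by omega⟩ := by unfold swapHalf; rw [dif_pos h]
      rw [h1]
      exact hsym j h
    · have h1 : swapHalf k j = ⟨(j : ℕ) - k, by omega⟩ := by unfold swapHalf; rw [dif_neg h]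
      have h3 := hsym ⟨(j : ℕ) - k, by omega⟩ (by simp; omega)
      have h5 : ξ j = (ξ ⟨(j : ℕ) - k, by omega⟩)⁻¹ := by
        convert h3 using 2
        apply Fin.ext
        simp
        omega
      rw [h1, h5, inv_inv]
  set σp : Equiv.Perm (Fin (2*k)) := Function.Involutive.toPerm _ (swapHalf_invol k) with hσp
  have hσapp : ∀ j, σp j = swapHalf k j := fun j => rfl
  have hβσ : ∀ S : Finset (Fin (2*k)), β (σp.finsetCongr S) = (β S)⁻¹ := by
    intro S
    rw [Equiv.finsetCongr_apply, hβ]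
    simp only
    rw [Finset.prod_map]
    rw [Finset.prod_congr rfl fun j _ => by
      rw [show (σp.toEmbedding : Fin (2*k) → Fin (2*k)) j = swapHalf k j from rfl, hπξ j]]
    exact Finset.prod_inv_distrib ξ
  have hεσ : ∀ S : Finset (Fin (2*k)), ε (σp.finsetCongr S) = ε S := by
    intro S
    simp only [hε, Equiv.finsetCongr_apply, Finset.card_map]
  -- work in RatFunc ℂ
  set i : ℂ →+* RatFunc ℂ := algebraMap ℂ (RatFunc ℂ) with hi
  set x : RatFunc ℂ := RatFunc.X with hx
  set AM : Polynomial ℂ →+* RatFunc ℂ := algebraMap (Polynomial ℂ) (RatFunc ℂ) with hAM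
  have hAMC : ∀ γ : ℂ, AM (C γ) = i γ := fun γ => by
    rw [hAM, hi, RatFunc.algebraMap_C, RatFunc.algebraMap_eq_C]
  have hm : ∀ T : Finset (Fin (2*k)), ((1 : RatFunc ℂ) - i (β T) * x) ^ 2 ≠ 0 :=
    fun T => pow_ne_zero 2 (one_sub_CX_ne (β T))
  have hm' : ∀ T : Finset (Fin (2*k)), ((1 : RatFunc ℂ) - i (β T) * x⁻¹) ^ 2 ≠ 0 :=
    fun T => pow_ne_zero 2 (one_sub_CXinv_ne (β T))
  have hAMX : AM X = x := by
    rw [hAM, hx]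
    exact RatFunc.algebraMap_X
  have hfac : ∀ γ : ℂ, AM ((1 - C γ * X) ^ 2) = (1 - i γ * x) ^ 2 := by
    intro γ
    rw [map_pow, map_sub, map_one, map_mul, hAMC, hAMX]
  have hA : AM pc = ∑ S : Finset (Fin (2*k)),
      (i (ε S * β S) * x) * ∏ T ∈ Finset.univ.erase S, (1 - i (β T) * x) ^ 2 := by
    rw [hpc, map_sum]
    refine Finset.sum_congr rfl fun S _ => ?_
    simp only [map_mul, map_prod, hAMC, hAMX, hfac]
    ring
  have hB : AM Qc = ∏ T : Finset (Fin (2*k)), (1 - i (β T) * x) ^ 2 := by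
    rw [hQc, map_prod]
    exact Finset.prod_congr rfl fun T _ => hfac (β T)
  have hfac' : ∀ γ : ℂ, Polynomial.aeval x⁻¹ ((1 - C γ * X) ^ 2 : Polynomial ℂ)
      = (1 - i γ * x⁻¹) ^ 2 := by
    intro γ
    rw [map_pow, map_sub, map_one, map_mul, Polynomial.aeval_C, Polynomial.aeval_X]
  have hA' : Polynomial.aeval x⁻¹ pc = ∑ S : Finset (Fin (2*k)),
      (i (ε S * β S) * x⁻¹) * ∏ T ∈ Finset.univ.erase S, (1 - i (β T) * x⁻¹) ^ 2 := by
    rw [hpc, map_sum]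
    refine Finset.sum_congr rfl fun S _ => ?_
    simp only [map_mul, map_prod, Polynomial.aeval_C, Polynomial.aeval_X, hfac', ← hi]
    ring
  have hB' : Polynomial.aeval x⁻¹ Qc = ∏ T : Finset (Fin (2*k)), (1 - i (β T) * x⁻¹) ^ 2 := by
    rw [hQc, map_prod]
    exact Finset.prod_congr rfl fun T _ => hfac' (β T)
  have core : AM pc / AM Qc = Polynomial.aeval x⁻¹ pc / Polynomial.aeval x⁻¹ Qc := by
    rw [hA, hB, hA', hB',
      sum_div_prod (fun S => i (ε S * β S) * x) (fun T => (1 - i (β T) * x) ^ 2) hm,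
      sum_div_prod (fun S => i (ε S * β S) * x⁻¹) (fun T => (1 - i (β T) * x⁻¹) ^ 2) hm']
    conv_rhs => rw [← Equiv.sum_comp σp.finsetCongr
      (fun S => (i (ε S * β S) * x⁻¹) / (1 - i (β S) * x⁻¹) ^ 2)]
    refine Finset.sum_congr rfl fun S _ => ?_
    simp only [hβσ, hεσ]
    have ht : i (β S) * x / (1 - i (β S) * x) ^ 2
        = i (β S)⁻¹ * x⁻¹ / (1 - i (β S)⁻¹ * x⁻¹) ^ 2 := by
      rw [hi, hx]
      exact termwise (β S)
    simp only [map_mul]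
    linear_combination i (ε S) * ht
  have hQcne : Qc ≠ 0 := fun hq => by rw [hq] at hQc0; simp at hQc0
  have core2 : AM pc * Polynomial.aeval x⁻¹ Qc = Polynomial.aeval x⁻¹ pc * AM Qc := by
    have hBne : AM Qc ≠ 0 := RatFunc.algebraMap_ne_zero hQcne
    have hB'ne : Polynomial.aeval x⁻¹ Qc ≠ 0 := by
      rw [hB']
      exact Finset.prod_ne_zero_iff.2 fun T _ => hm' T
    exact (div_eq_div_iff hBne hB'ne).1 core
  -- transfer to a polynomial identity
  set d : ℕ := max p.natDegree Q.natDegree with hd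
  have hdpc : pc.natDegree ≤ d := by
    rw [← hpmap]
    exact Polynomial.natDegree_map_le.trans (le_max_left _ _)
  have hdQc : Qc.natDegree ≤ d := by
    rw [← hQmap]
    exact Polynomial.natDegree_map_le.trans (le_max_right _ _)
  have HC : pc * Qc.reflect d = pc.reflect d * Qc := by
    apply RatFunc.algebraMap_injective ℂ
    rw [map_mul, map_mul]
    rw [show algebraMap (Polynomial ℂ) (RatFunc ℂ) = AM from rfl]
    rw [show (algebraMap (Polynomial ℂ) (RatFunc ℂ)) (Qc.reflect d)
      = RatFunc.X ^ d * Polynomial.aeval (RatFunc.X⁻¹ : RatFunc ℂ) Qc from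
        reflect_ratfunc Qc hdQc]
    rw [show (algebraMap (Polynomial ℂ) (RatFunc ℂ)) (pc.reflect d)
      = RatFunc.X ^ d * Polynomial.aeval (RatFunc.X⁻¹ : RatFunc ℂ) pc from
        reflect_ratfunc pc hdpc]
    rw [← hx]
    linear_combination (x ^ d) * core2
  have HZ : p * Q.reflect d = p.reflect d * Q := by
    apply Polynomial.map_injective (Int.castRingHom ℂ) Int.cast_injective
    rw [Polynomial.map_mul, Polynomial.map_mul, ← Polynomial.reflect_map,
      ← Polynomial.reflect_map, hpmap, hQmap]
    exact HC
  have HQ : p.map (Int.castRingHom ℚ) * (Q.map (Int.castRingHom ℚ)).reflect d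
      = (p.map (Int.castRingHom ℚ)).reflect d * Q.map (Int.castRingHom ℚ) := by
    have h6 := congrArg (Polynomial.map (Int.castRingHom ℚ)) HZ
    rw [Polynomial.map_mul, Polynomial.map_mul, ← Polynomial.reflect_map,
      ← Polynomial.reflect_map] at h6
    exact h6
  -- conclude in RatFunc ℚ
  have hdpq : (p.map (Int.castRingHom ℚ)).natDegree ≤ d :=
    Polynomial.natDegree_map_le.trans (le_max_left _ _)
  have hdQq : (Q.map (Int.castRingHom ℚ)).natDegree ≤ d :=
    Polynomial.natDegree_map_le.trans (le_max_right _ _)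
  have hQqne : Q.map (Int.castRingHom ℚ) ≠ 0 := fun hq => by
    have := congrArg (fun r => Polynomial.coeff r 0) hq
    simp [Polynomial.coeff_map, hQ0] at this
  have hrefne : (Q.map (Int.castRingHom ℚ)).reflect d ≠ 0 := by
    have h0 : ((Q.map (Int.castRingHom ℚ)).reflect d).coeff d = 1 := by
      rw [Polynomial.coeff_reflect, Polynomial.revAt_le (le_refl d), tsub_self,
        Polynomial.coeff_map, hQ0]
      simp
    intro hq
    rw [hq] at h0
    simp at h0
  have hinst : ∀ q : Polynomial ℚ, Polynomial.aeval (RatFunc.X⁻¹ : RatFunc ℚ) q =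
      @Polynomial.aeval ℚ (RatFunc ℚ) _ _ (RatFunc.instAlgebraOfPolynomial ℚ ℚ) RatFunc.X⁻¹ q := by
    intro q
    exact congrArg (fun f : ℚ →+* RatFunc ℚ => Polynomial.eval₂ f (RatFunc.X⁻¹) q)
      (RingHom.ext_rat _ _)
  have haeQne : Polynomial.aeval ((RatFunc.X : RatFunc ℚ))⁻¹ (Q.map (Int.castRingHom ℚ)) ≠ 0 := by
    intro h
    rw [hinst] at h
    have h1 := reflect_ratfunc (Q.map (Int.castRingHom ℚ)) hdQq
    rw [h, mul_zero] at h1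
    exact RatFunc.algebraMap_ne_zero hrefne h1
  rw [div_eq_div_iff (RatFunc.algebraMap_ne_zero hQqne) haeQne]
  have h2 := congrArg (algebraMap (Polynomial ℚ) (RatFunc ℚ)) HQ
  rw [map_mul, map_mul, reflect_ratfunc _ hdQq, reflect_ratfunc _ hdpq] at h2
  apply mul_left_cancel₀ (pow_ne_zero d (RatFunc.X_ne_zero (K := ℚ)))
  rw [hinst (p.map (Int.castRingHom ℚ)), hinst (Q.map (Int.castRingHom ℚ))]
  linear_combination h2
end
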